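/- arXiv:q-alg/9611001 — 7 statements merged into one kernel-verified Lean document; each statement's English description precedes it below -/
import Mathlib

section
/- Let g̃ ∈ (ℚ[[t]])[[z]] be defined by g̃ := (∏_{j≥0}(1 − q^{4+4j}·z)) · (∏_{j≥0}(1 − q^{2+4j}·z))⁻¹ with q := t², where both infinite products are multipliable in the topology of coefficientwise convergence and the second product is invertible because its constant term is 1. Define f(z) := t·(1 − z)·g̃(z)² ∈ (ℚ[[t]])[[z]]. Then (1 − q²z)·f(z)·f(q²z) = q·(1 − z), where f(q²z) denotes the rescaling z ↦ q²z applied to f. (This says f satisfies the difference equation f(z)f(q²z) = d(q²z)⁻¹ with d(z) = (1−z)/(q − q⁻¹z), since d(q²z)⁻¹ = q(1−z)/(1−q²z), for the scalar factor f(z) = q^{1/2}(1−z)g̃(z)² of the R-matrix, with t playing the role of q^{1/2}.) -/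
/-- The topology of coefficientwise convergence on `R[[X]]`: the product topology on the
coefficient function, `R[[X]]` being by definition the function space `(Unit →₀ ℕ) → R`. -/
noncomputable def coeffwiseTopology (R : Type*) [TopologicalSpace R] :
    TopologicalSpace (PowerSeries R) :=
  inferInstanceAs (TopologicalSpace ((Unit →₀ ℕ) → R))

section Aux

open PowerSeries Finset

abbrev Rq : Type := PowerSeries ℚ
abbrev Sq : Type := PowerSeries Rq

/-- One factor of the infinite products. -/
noncomputable def facS (c : ℕ → Rq) (j : ℕ) : Sq :=
  1 - PowerSeries.C (R := Rq) (c j) * PowerSeries.X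

/-- Partial products. -/
noncomputable def pprod (c : ℕ → Rq) (F : Finset ℕ) : Sq := ∏ j ∈ F, facS c j

/-- Explicit limit of the infinite product, defined coefficientwise by stabilization. -/
noncomputable def Lim (c : ℕ → Rq) : Sq :=
  PowerSeries.mk fun n => PowerSeries.mk fun m =>
    PowerSeries.coeff (R := ℚ) m (PowerSeries.coeff (R := Rq) n (pprod c (range (m + 1))))

lemma C_dvd_of_forall {d : Rq} {Y : Sq} (h : ∀ n, d ∣ PowerSeries.coeff (R := Rq) n Y) :
    PowerSeries.C (R := Rq) d ∣ Y := by
  refine ⟨PowerSeries.mk fun n => (h n).choose, ?_⟩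
  apply PowerSeries.ext
  intro n
  rw [PowerSeries.coeff_C_mul, PowerSeries.coeff_mk]
  exact (h n).choose_spec

lemma dvd_pprod_sub_one {d : Rq} {c : ℕ → Rq} {F : Finset ℕ} (h : ∀ j ∈ F, d ∣ c j) :
    PowerSeries.C (R := Rq) d ∣ pprod c F - 1 := by
  classical
  induction F using Finset.induction_on with
  | empty => simp [pprod]
  | insert a F ha ih =>
    have h1 : PowerSeries.C (R := Rq) d ∣ pprod c F - 1 :=
      ih fun j hj => h j (mem_insert_of_mem hj)
    have h2 : PowerSeries.C (R := Rq) d ∣ facS c a - 1 := by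
      have : facS c a - 1 = -(PowerSeries.C (R := Rq) (c a) * PowerSeries.X) := by
        rw [facS]; ring
      rw [this]
      exact dvd_neg.mpr ((map_dvd (PowerSeries.C (R := Rq)) (h a (mem_insert_self a F))).mul_right _)
    have hprod : pprod c (insert a F) = facS c a * pprod c F := by
      rw [pprod, pprod, Finset.prod_insert ha]
    have : pprod c (insert a F) - 1 = facS c a * (pprod c F - 1) + (facS c a - 1) := by
      rw [hprod]; ring
    rw [this]
    exact dvd_add (h1.mul_left _) h2

lemma dvd_pprod_sub {c : ℕ → Rq} {d : Rq} {F F' : Finset ℕ} (hFF : F ⊆ F')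
    (h : ∀ j ∈ F', j ∉ F → d ∣ c j) :
    PowerSeries.C (R := Rq) d ∣ pprod c F' - pprod c F := by
  have hE : PowerSeries.C (R := Rq) d ∣ pprod c (F' \ F) - 1 :=
    dvd_pprod_sub_one fun j hj => h j (mem_sdiff.mp hj).1 (mem_sdiff.mp hj).2
  have heq : pprod c F' = pprod c (F' \ F) * pprod c F := by
    rw [pprod, pprod, pprod, Finset.prod_sdiff hFF]
  have : pprod c F' - pprod c F = (pprod c (F' \ F) - 1) * pprod c F := by
    rw [heq]; ring
  rw [this]
  exact hE.mul_right _

lemma coeff_coeff_eq_zero {m m' n : ℕ} (hm : m' ≤ m) {Y : Sq}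
    (h : PowerSeries.C (R := Rq) ((PowerSeries.X : Rq) ^ (m + 1)) ∣ Y) :
    PowerSeries.coeff (R := ℚ) m' (PowerSeries.coeff (R := Rq) n Y) = 0 := by
  obtain ⟨Z, rfl⟩ := h
  rw [PowerSeries.coeff_C_mul]
  exact PowerSeries.X_pow_dvd_iff.mp (dvd_mul_right _ _) m' (by omega)

lemma approx {c : ℕ → Rq} (hc : ∀ j, (PowerSeries.X : Rq) ^ (j + 1) ∣ c j) {m : ℕ}
    {F : Finset ℕ} (hF : ∀ j, j ∉ F → (PowerSeries.X : Rq) ^ (m + 1) ∣ c j) :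
    PowerSeries.C (R := Rq) ((PowerSeries.X : Rq) ^ (m + 1)) ∣ Lim c - pprod c F := by
  apply C_dvd_of_forall
  intro n
  rw [PowerSeries.X_pow_dvd_iff]
  intro m' hm'
  have hm'le : m' ≤ m := by omega
  have key : ∀ G : Finset ℕ, G ⊆ F ∪ range (m' + 1) →
      (∀ j ∈ F ∪ range (m' + 1), j ∉ G → (PowerSeries.X : Rq) ^ (m' + 1) ∣ c j) →
      PowerSeries.coeff (R := ℚ) m' (PowerSeries.coeff (R := Rq) n (pprod c (F ∪ range (m' + 1)))) =
        PowerSeries.coeff (R := ℚ) m' (PowerSeries.coeff (R := Rq) n (pprod c G)) := by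
    intro G hG hdj
    have h0 : PowerSeries.coeff (R := ℚ) m'
        (PowerSeries.coeff (R := Rq) n (pprod c (F ∪ range (m' + 1)) - pprod c G)) = 0 :=
      coeff_coeff_eq_zero le_rfl (dvd_pprod_sub hG hdj)
    rw [map_sub, map_sub, sub_eq_zero] at h0
    exact h0
  have e1 : PowerSeries.coeff (R := ℚ) m' (PowerSeries.coeff (R := Rq) n (Lim c)) =
      PowerSeries.coeff (R := ℚ) m' (PowerSeries.coeff (R := Rq) n (pprod c (range (m' + 1)))) := by
    simp [Lim, PowerSeries.coeff_mk]
  have e2 := key F Finset.subset_union_left (fun j _ hjF =>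
    dvd_trans (pow_dvd_pow _ (by omega)) (hF j hjF))
  have e3 := key (range (m' + 1)) Finset.subset_union_right (fun j _ hjr => by
    have : m' + 1 ≤ j := by
      by_contra hlt
      exact hjr (mem_range.mpr (by omega))
    exact dvd_trans (pow_dvd_pow _ (by omega)) (hc j))
  rw [map_sub, map_sub, e1, ← e3, e2, sub_self]

lemma sep {A B : Sq}
    (h : ∀ m : ℕ, PowerSeries.C (R := Rq) ((PowerSeries.X : Rq) ^ (m + 1)) ∣ A - B) : A = B := by
  apply PowerSeries.ext
  intro n
  apply PowerSeries.ext
  intro m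
  have h0 : PowerSeries.coeff (R := ℚ) m (PowerSeries.coeff (R := Rq) n (A - B)) = 0 :=
    coeff_coeff_eq_zero le_rfl (h m)
  rw [map_sub, map_sub, sub_eq_zero] at h0
  exact h0

/-- The exponent sequences occurring in the products. -/
noncomputable def cA (a : ℕ) : ℕ → Rq := fun j => ((PowerSeries.X : Rq) ^ 2) ^ (a + 4 * j)

lemma cA_eq (a j : ℕ) : cA a j = (PowerSeries.X : Rq) ^ (2 * (a + 4 * j)) := by
  rw [cA, ← pow_mul]

lemma hcA {a : ℕ} (ha : 1 ≤ a) (j : ℕ) : (PowerSeries.X : Rq) ^ (j + 1) ∣ cA a j := by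
  rw [cA_eq]; exact pow_dvd_pow _ (by omega)

lemma constantCoeff_Lim (c : ℕ → Rq) : PowerSeries.constantCoeff (R := Rq) (Lim c) = 1 := by
  rw [← PowerSeries.coeff_zero_eq_constantCoeff_apply]
  have h0 : ∀ F : Finset ℕ, PowerSeries.coeff (R := Rq) 0 (pprod c F) = 1 := by
    intro F
    rw [PowerSeries.coeff_zero_eq_constantCoeff_apply, pprod, map_prod]
    refine Finset.prod_eq_one fun j _ => ?_
    simp [facS]
  apply PowerSeries.ext
  intro m
  simp [Lim, PowerSeries.coeff_mk, h0]

lemma isUnit_Lim (c : ℕ → Rq) : IsUnit (Lim c) :=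
  PowerSeries.isUnit_iff_constantCoeff.mpr (by rw [constantCoeff_Lim]; exact isUnit_one)

lemma rescale_C' (k r : Rq) : PowerSeries.rescale k (PowerSeries.C (R := Rq) r) =
    PowerSeries.C (R := Rq) r := by
  ext n
  rw [PowerSeries.coeff_rescale]
  by_cases hn : n = 0
  · subst hn; simp
  · simp [PowerSeries.coeff_C, hn]

/-- Fact (i): `(q²z;q⁴)_∞ = (1 - q²z)·(q⁶z;q⁴)_∞`. -/
lemma fact_i : Lim (cA 2) =
    (1 - PowerSeries.C (R := Rq) (((PowerSeries.X : Rq) ^ 2) ^ 2) * PowerSeries.X) * Lim (cA 6) := by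
  apply sep
  intro m
  have h1 : PowerSeries.C (R := Rq) ((PowerSeries.X : Rq) ^ (m + 1)) ∣
      Lim (cA 2) - pprod (cA 2) (range (m + 1)) :=
    approx (hcA (by norm_num)) (fun j hj => by
      have : m + 1 ≤ j := by
        by_contra hlt; exact hj (mem_range.mpr (by omega))
      exact dvd_trans (pow_dvd_pow _ (by omega)) (hcA (by norm_num) j))
  have h2 : PowerSeries.C (R := Rq) ((PowerSeries.X : Rq) ^ (m + 1)) ∣
      Lim (cA 6) - pprod (cA 6) (range m) :=
    approx (hcA (by norm_num)) (fun j hj => by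
      have : m ≤ j := by
        by_contra hlt; exact hj (mem_range.mpr (by omega))
      rw [cA_eq]
      exact pow_dvd_pow _ (by omega))
  have h3 : pprod (cA 2) (range (m + 1)) =
      (1 - PowerSeries.C (R := Rq) (((PowerSeries.X : Rq) ^ 2) ^ 2) * PowerSeries.X) *
        pprod (cA 6) (range m) := by
    rw [pprod, Finset.prod_range_succ']
    have hshift : ∀ i : ℕ, facS (cA 2) (i + 1) = facS (cA 6) i := by
      intro i
      rw [facS, facS, cA_eq, cA_eq]
      have he : 2 * (2 + 4 * (i + 1)) = 2 * (6 + 4 * i) := by omega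
      rw [he]
    have h0 : facS (cA 2) 0 =
        1 - PowerSeries.C (R := Rq) (((PowerSeries.X : Rq) ^ 2) ^ 2) * PowerSeries.X := by
      rw [facS, cA]
    rw [h0, pprod]
    rw [Finset.prod_congr rfl fun i _ => hshift i]
    ring
  have : Lim (cA 2) -
      (1 - PowerSeries.C (R := Rq) (((PowerSeries.X : Rq) ^ 2) ^ 2) * PowerSeries.X) * Lim (cA 6) =
      (Lim (cA 2) - pprod (cA 2) (range (m + 1))) -
        (1 - PowerSeries.C (R := Rq) (((PowerSeries.X : Rq) ^ 2) ^ 2) * PowerSeries.X) *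
          (Lim (cA 6) - pprod (cA 6) (range m)) := by
    rw [h3]; ring
  rw [this]
  exact dvd_sub h1 (h2.mul_left _)

/-- Fact (ii): rescaling by `q²` shifts the products. -/
lemma fact_ii {a : ℕ} (ha : 1 ≤ a) :
    PowerSeries.rescale (((PowerSeries.X : Rq) ^ 2) ^ 2) (Lim (cA a)) = Lim (cA (a + 2)) := by
  set k : Rq := ((PowerSeries.X : Rq) ^ 2) ^ 2 with hk
  apply sep
  intro m
  have h1 : PowerSeries.C (R := Rq) ((PowerSeries.X : Rq) ^ (m + 1)) ∣
      Lim (cA a) - pprod (cA a) (range (m + 1)) :=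
    approx (hcA ha) (fun j hj => by
      have : m + 1 ≤ j := by
        by_contra hlt; exact hj (mem_range.mpr (by omega))
      exact dvd_trans (pow_dvd_pow _ (by omega)) (hcA ha j))
  have h2 : PowerSeries.C (R := Rq) ((PowerSeries.X : Rq) ^ (m + 1)) ∣
      Lim (cA (a + 2)) - pprod (cA (a + 2)) (range (m + 1)) :=
    approx (hcA (by omega)) (fun j hj => by
      have : m + 1 ≤ j := by
        by_contra hlt; exact hj (mem_range.mpr (by omega))
      exact dvd_trans (pow_dvd_pow _ (by omega)) (hcA (by omega) j))
  have hck : ∀ j : ℕ, cA (a + 2) j = k * cA a j := by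
    intro j
    rw [hk, cA, cA, ← pow_add]
    congr 1
    omega
  have h3 : PowerSeries.rescale k (pprod (cA a) (range (m + 1))) =
      pprod (cA (a + 2)) (range (m + 1)) := by
    rw [pprod, pprod, map_prod]
    refine Finset.prod_congr rfl fun j _ => ?_
    rw [facS, facS, map_sub, map_one, map_mul, rescale_C', PowerSeries.rescale_X, hck j,
      map_mul]
    ring
  have h4 : PowerSeries.C (R := Rq) ((PowerSeries.X : Rq) ^ (m + 1)) ∣
      PowerSeries.rescale k (Lim (cA a)) - pprod (cA (a + 2)) (range (m + 1)) := by
    obtain ⟨Z, hZ⟩ := h1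
    rw [← h3, ← map_sub, hZ, map_mul, rescale_C']
    exact Dvd.intro _ rfl
  have : PowerSeries.rescale k (Lim (cA a)) - Lim (cA (a + 2)) =
      (PowerSeries.rescale k (Lim (cA a)) - pprod (cA (a + 2)) (range (m + 1))) -
        (Lim (cA (a + 2)) - pprod (cA (a + 2)) (range (m + 1))) := by
    ring
  rw [this]
  exact dvd_sub h4 h2

/-- The purely algebraic final identity. -/
lemma aux4 (p4 p2 : Sq) (h4 : p4 = Lim (cA 4)) (h2 : p2 = Lim (cA 2)) :
    (1 - PowerSeries.C (R := Rq) (((PowerSeries.X : Rq) ^ 2) ^ 2) * PowerSeries.X) *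
        (PowerSeries.C (R := Rq) (PowerSeries.X : Rq) * (1 - PowerSeries.X) *
          (p4 * Ring.inverse p2) ^ 2) *
        PowerSeries.rescale (((PowerSeries.X : Rq) ^ 2) ^ 2)
          (PowerSeries.C (R := Rq) (PowerSeries.X : Rq) * (1 - PowerSeries.X) *
            (p4 * Ring.inverse p2) ^ 2) =
      PowerSeries.C (R := Rq) ((PowerSeries.X : Rq) ^ 2) * (1 - PowerSeries.X) := by
  subst h4 h2
  set k : Rq := ((PowerSeries.X : Rq) ^ 2) ^ 2 with hk
  set v : Sq := Ring.inverse (Lim (cA 2)) with hv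
  set w : Sq := PowerSeries.rescale k v with hw
  have h1 : Lim (cA 2) * v = 1 := Ring.mul_inverse_cancel _ (isUnit_Lim _)
  have hii2 : PowerSeries.rescale k (Lim (cA 2)) = Lim (cA 4) := fact_ii (by norm_num)
  have hii4 : PowerSeries.rescale k (Lim (cA 4)) = Lim (cA 6) := fact_ii (by norm_num)
  have huw : Lim (cA 4) * w = 1 := by
    rw [hw, ← hii2, ← map_mul, h1, map_one]
  have e2 : (1 - PowerSeries.C (R := Rq) k * PowerSeries.X) * Lim (cA 6) * v = 1 := by
    rw [← fact_i, h1]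
  have hres : PowerSeries.rescale k
      (PowerSeries.C (R := Rq) (PowerSeries.X : Rq) * (1 - PowerSeries.X) *
        (Lim (cA 4) * v) ^ 2) =
      PowerSeries.C (R := Rq) (PowerSeries.X : Rq) *
        (1 - PowerSeries.C (R := Rq) k * PowerSeries.X) * (Lim (cA 6) * w) ^ 2 := by
    rw [map_mul, map_mul, map_pow, map_mul, map_sub, map_one, rescale_C',
      PowerSeries.rescale_X, hii4, hw]
  calc (1 - PowerSeries.C (R := Rq) k * PowerSeries.X) *
        (PowerSeries.C (R := Rq) (PowerSeries.X : Rq) * (1 - PowerSeries.X) *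
          (Lim (cA 4) * v) ^ 2) *
        PowerSeries.rescale k
          (PowerSeries.C (R := Rq) (PowerSeries.X : Rq) * (1 - PowerSeries.X) *
            (Lim (cA 4) * v) ^ 2)
      = (PowerSeries.C (R := Rq) (PowerSeries.X : Rq) * PowerSeries.C (R := Rq) (PowerSeries.X : Rq)) *
          (1 - PowerSeries.X) * (Lim (cA 4) * w) ^ 2 *
          ((1 - PowerSeries.C (R := Rq) k * PowerSeries.X) * Lim (cA 6) * v) ^ 2 := by
        rw [hres]; ring
    _ = PowerSeries.C (R := Rq) ((PowerSeries.X : Rq) ^ 2) * (1 - PowerSeries.X) := by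
        rw [huw, e2, ← map_mul, ← pow_two]
        ring

/-! ### Topological part -/

noncomputable def τQ : TopologicalSpace ℚ := ⊥
noncomputable def τR : TopologicalSpace Rq := @coeffwiseTopology ℚ τQ
noncomputable def τS : TopologicalSpace Sq := @coeffwiseTopology Rq τR

lemma T2aux : @T2Space Sq τS := by
  have hQ : @T2Space ℚ ⊥ := @DiscreteTopology.toT2Space ℚ ⊥ (discreteTopology_bot ℚ)
  have hR : @T2Space Rq τR :=
    @Pi.t2Space (Unit →₀ ℕ) (fun _ => ℚ) (fun _ => (⊥ : TopologicalSpace ℚ)) (fun _ => hQ)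
  exact @Pi.t2Space (Unit →₀ ℕ) (fun _ => Rq) (fun _ => τR) (fun _ => hR)

lemma hasProd_Lim (c : ℕ → Rq) (hc : ∀ j, (PowerSeries.X : Rq) ^ (j + 1) ∣ c j) :
    @HasProd Sq ℕ _ τS (facS c) (Lim c) (SummationFilter.unconditional ℕ) := by
  have key : ∀ (n m : ℕ) (s : Finset ℕ), range (m + 1) ⊆ s →
      PowerSeries.coeff (R := ℚ) m (PowerSeries.coeff (R := Rq) n (∏ j ∈ s, facS c j)) =
        PowerSeries.coeff (R := ℚ) m (PowerSeries.coeff (R := Rq) n (Lim c)) := by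
    intro n m s hs
    have hdvd : PowerSeries.C (R := Rq) ((PowerSeries.X : Rq) ^ (m + 1)) ∣ Lim c - pprod c s :=
      approx hc (fun j hj => by
        have : m + 1 ≤ j := by
          by_contra hlt
          exact hj (hs (mem_range.mpr (by omega)))
        exact dvd_trans (pow_dvd_pow _ (by omega)) (hc j))
    have h0 : PowerSeries.coeff (R := ℚ) m (PowerSeries.coeff (R := Rq) n (Lim c - pprod c s)) = 0 :=
      coeff_coeff_eq_zero le_rfl hdvd
    rw [map_sub, map_sub, sub_eq_zero] at h0
    exact h0.symm
  refine (tendsto_pi_nhds (T := fun _ : Unit →₀ ℕ => τR)).mpr fun d =>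
    (tendsto_pi_nhds (T := fun _ : Unit →₀ ℕ => (⊥ : TopologicalSpace ℚ))).mpr fun e => ?_
  letI : TopologicalSpace ℚ := (⊥ : TopologicalSpace ℚ)
  have hde : ∀ x : Sq, x d e =
      PowerSeries.coeff (R := ℚ) (e ()) (PowerSeries.coeff (R := Rq) (d ()) x) := by
    intro x
    conv_lhs => rw [Finsupp.unique_single d, Finsupp.unique_single e]
    rfl
  have hev : ∀ᶠ s in Filter.atTop, (∏ j ∈ s, facS c j) d e = Lim c d e := by
    filter_upwards [Filter.eventually_ge_atTop (range (e () + 1))] with s hs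
    exact (hde _).trans (((key (d ()) (e ()) s hs)).trans (hde _).symm)
  exact Filter.Tendsto.congr' (hev.mono fun s h => h.symm) tendsto_const_nhds

end Aux

/-- In `(ℚ[[t]])[[z]]` with the topology of coefficientwise convergence
(`ℚ` discrete), set `q = t²`, let
`g̃ = (∏_{j≥0}(1 − q^(4+4j)z)) · (∏_{j≥0}(1 − q^(2+4j)z))⁻¹` (both families multipliable,
the second product a unit since its constant term is `1`, with `Ring.inverse` its genuine
inverse), and `f(z) = t·(1 − z)·g̃(z)²`. Then `(1 − q²z)·f(z)·f(q²z) = q·(1 − z)`. -/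
theorem stmt_0 :
    letI : TopologicalSpace ℚ := ⊥
    letI : TopologicalSpace (PowerSeries ℚ) := coeffwiseTopology ℚ
    letI : TopologicalSpace (PowerSeries (PowerSeries ℚ)) := coeffwiseTopology (PowerSeries ℚ)
    let t : PowerSeries ℚ := PowerSeries.X
    let q : PowerSeries ℚ := t ^ 2
    let P4 : PowerSeries (PowerSeries ℚ) :=
      ∏' j : ℕ, (1 - PowerSeries.C (R := PowerSeries ℚ) (q ^ (4 + 4 * j)) * PowerSeries.X)
    let P2 : PowerSeries (PowerSeries ℚ) :=
      ∏' j : ℕ, (1 - PowerSeries.C (R := PowerSeries ℚ) (q ^ (2 + 4 * j)) * PowerSeries.X)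
    let gt : PowerSeries (PowerSeries ℚ) := P4 * Ring.inverse P2
    let f : PowerSeries (PowerSeries ℚ) :=
      PowerSeries.C (R := PowerSeries ℚ) t * (1 - PowerSeries.X) * gt ^ 2
    (Multipliable fun j : ℕ =>
      (1 - PowerSeries.C (R := PowerSeries ℚ) (q ^ (4 + 4 * j)) * PowerSeries.X)) ∧
    (Multipliable fun j : ℕ =>
      (1 - PowerSeries.C (R := PowerSeries ℚ) (q ^ (2 + 4 * j)) * PowerSeries.X)) ∧
    IsUnit P2 ∧
    (1 - PowerSeries.C (R := PowerSeries ℚ) (q ^ 2) * PowerSeries.X) * f *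
        PowerSeries.rescale (q ^ 2) f =
      PowerSeries.C (R := PowerSeries ℚ) q * (1 - PowerSeries.X) := by
  intro t q P4 P2 gt f
  letI : TopologicalSpace Sq := τS
  haveI : T2Space Sq := T2aux
  have hc4 : ∀ j, (PowerSeries.X : Rq) ^ (j + 1) ∣ cA 4 j := hcA (by norm_num)
  have hc2 : ∀ j, (PowerSeries.X : Rq) ^ (j + 1) ∣ cA 2 j := hcA (by norm_num)
  have hP4 : P4 = Lim (cA 4) := (hasProd_Lim (cA 4) hc4).tprod_eq
  have hP2 : P2 = Lim (cA 2) := (hasProd_Lim (cA 2) hc2).tprod_eq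
  refine ⟨⟨Lim (cA 4), hasProd_Lim (cA 4) hc4⟩, ⟨Lim (cA 2), hasProd_Lim (cA 2) hc2⟩, ?_, ?_⟩
  · rw [hP2]; exact isUnit_Lim _
  · exact aux4 P4 P2 hP4 hP2
end

section
/- Let R be a commutative ring and q ∈ R a unit such that 1 + q^{2n} is a unit of R for every integer n ≥ 1. Let g ∈ R[[z]] and let u be a unit of R with u² equal to the constant term of g. Then there exists a unique power series F ∈ R[[z]] with constant term u satisfying F(z)·F(q²z) = g(z), where F(q²z) denotes the rescaling z ↦ q²z applied to F. -/
open PowerSeries Finset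

noncomputable def stmtAuxF {R : Type*} [CommRing R] (q : R) (g : PowerSeries R) (u : Rˣ) :
    ℕ → R
  | 0 => u
  | (n+1) => Ring.inverse ((1 + q ^ (2 * (n+1))) * u) *
      (PowerSeries.coeff (n+1) g -
        ∑ i : Fin n, stmtAuxF q g u (i+1) * (q^2) ^ (n - (i:ℕ)) * stmtAuxF q g u (n - i))
  decreasing_by
    · have := i.isLt; omega
    · have := i.isLt; omega

lemma coeff_mul_rescale_succ {R : Type*} [CommRing R] (F : PowerSeries R) (c : R) (n : ℕ) :
    PowerSeries.coeff (n+1) (F * PowerSeries.rescale c F) =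
      PowerSeries.coeff 0 F * c ^ (n+1) * PowerSeries.coeff (n+1) F +
      (∑ i : Fin n, PowerSeries.coeff (i+1) F * c ^ (n - (i:ℕ)) *
        PowerSeries.coeff (n - (i:ℕ)) F) +
      PowerSeries.coeff (n+1) F * PowerSeries.coeff 0 F := by
  rw [PowerSeries.coeff_mul, Finset.Nat.sum_antidiagonal_eq_sum_range_succ_mk]
  simp only [PowerSeries.coeff_rescale]
  rw [Finset.sum_range_succ, Finset.sum_range_succ']
  rw [Fin.sum_univ_eq_sum_range (fun i => PowerSeries.coeff (i+1) F * c ^ (n - i) *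
        PowerSeries.coeff (n - i) F)]
  congr 1
  · rw [add_comm]
    congr 1
    · simp only [Nat.sub_zero]; ring
    · apply Finset.sum_congr rfl
      intro i hi
      have h : n + 1 - (i + 1) = n - i := by omega
      rw [h]; ring
  · simp only [Nat.sub_self, pow_zero, one_mul]

lemma stmt_forced {R : Type*} [CommRing R] (q : R)
    (hq2 : ∀ n : ℕ, 1 ≤ n → IsUnit (1 + q ^ (2 * n)))
    (g : PowerSeries R) (u : Rˣ) (F : PowerSeries R)
    (h0 : PowerSeries.constantCoeff F = (u : R))
    (hF : F * PowerSeries.rescale (q ^ 2) F = g) :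
    ∀ n, PowerSeries.coeff n F = stmtAuxF q g u n := by
  intro n
  induction n using Nat.strong_induction_on with
  | _ n ih =>
    match n with
    | 0 => simp [stmtAuxF, PowerSeries.coeff_zero_eq_constantCoeff, h0]
    | (n+1) =>
      have hcoeff := congrArg (PowerSeries.coeff (n+1)) hF
      rw [coeff_mul_rescale_succ] at hcoeff
      have hmid : (∑ i : Fin n, PowerSeries.coeff (i+1) F * (q^2)^(n-(i:ℕ)) *
          PowerSeries.coeff (n-(i:ℕ)) F)
          = ∑ i : Fin n, stmtAuxF q g u (i+1) * (q^2)^(n-(i:ℕ)) * stmtAuxF q g u (n-(i:ℕ)) := by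
        apply Finset.sum_congr rfl; intro i _
        rw [ih (i+1) (by have := i.isLt; omega), ih (n - i) (by omega)]
      rw [PowerSeries.coeff_zero_eq_constantCoeff, h0, hmid] at hcoeff
      have ha : IsUnit ((1 + q ^ (2 * (n+1))) * (u : R)) :=
        (hq2 (n+1) (by omega)).mul u.isUnit
      have hpow : q ^ (2*(n+1)) = (q^2)^(n+1) := pow_mul q 2 (n+1)
      have key : (1 + q ^ (2*(n+1))) * (u : R) * PowerSeries.coeff (n+1) F
          = PowerSeries.coeff (n+1) g -
            ∑ i : Fin n, stmtAuxF q g u (i+1) * (q^2)^(n-(i:ℕ)) * stmtAuxF q g u (n-(i:ℕ)) := by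
        rw [← hcoeff, hpow]; ring
      show PowerSeries.coeff (n+1) F = stmtAuxF q g u (n+1)
      rw [stmtAuxF, ← key, ← mul_assoc, Ring.inverse_mul_cancel _ ha, one_mul]

/-- Let `R` be a commutative ring and `q ∈ R` a unit such that `1 + q^(2n)`
is a unit for every integer `n ≥ 1`. For any `g ∈ R[[z]]` and any unit `u` of `R` with
`u² = constant term of g`, there is a unique power series `F` with constant term `u`
satisfying `F(z)·F(q²z) = g(z)`. -/
theorem stmt_1 (R : Type*) [CommRing R] (q : R) (hq : IsUnit q)
    (hq2 : ∀ n : ℕ, 1 ≤ n → IsUnit (1 + q ^ (2 * n)))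
    (g : PowerSeries R) (u : Rˣ) (hu : (u : R) ^ 2 = PowerSeries.constantCoeff g) :
    ∃! F : PowerSeries R, PowerSeries.constantCoeff F = (u : R) ∧
      F * PowerSeries.rescale (q ^ 2) F = g := by
  refine ⟨PowerSeries.mk (stmtAuxF q g u), ⟨?_, ?_⟩, ?_⟩
  · simp [← PowerSeries.coeff_zero_eq_constantCoeff, PowerSeries.coeff_mk, stmtAuxF]
  · ext n
    match n with
    | 0 =>
      simp [PowerSeries.coeff_mul, PowerSeries.coeff_rescale, PowerSeries.coeff_mk,
        stmtAuxF, ← hu, sq, PowerSeries.coeff_zero_eq_constantCoeff]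
    | (n+1) =>
      rw [coeff_mul_rescale_succ]
      simp only [PowerSeries.coeff_mk]
      have ha : IsUnit ((1 + q ^ (2 * (n+1))) * (u : R)) :=
        (hq2 (n+1) (by omega)).mul u.isUnit
      set S := ∑ i : Fin n, stmtAuxF q g u (i+1) * (q^2)^(n-(i:ℕ)) * stmtAuxF q g u (n-(i:ℕ))
        with hS
      have h1 : stmtAuxF q g u (n+1) = Ring.inverse ((1 + q ^ (2 * (n+1))) * (u : R)) *
          (PowerSeries.coeff (n+1) g - S) := by rw [stmtAuxF]
      have hcancel : (1 + q ^ (2*(n+1))) * (u : R) * stmtAuxF q g u (n+1)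
          = PowerSeries.coeff (n+1) g - S := by
        rw [h1, ← mul_assoc, Ring.mul_inverse_cancel _ ha, one_mul]
      have h0 : stmtAuxF q g u 0 = (u : R) := by rw [stmtAuxF]
      have hpow : q ^ (2*(n+1)) = (q^2)^(n+1) := pow_mul q 2 (n+1)
      calc stmtAuxF q g u 0 * (q^2)^(n+1) * stmtAuxF q g u (n+1) + S +
            stmtAuxF q g u (n+1) * stmtAuxF q g u 0
          = (1 + q ^ (2*(n+1))) * (u : R) * stmtAuxF q g u (n+1) + S := by
            rw [h0, hpow]; ring
        _ = PowerSeries.coeff (n+1) g := by rw [hcancel]; ring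
  · rintro F ⟨h0, hF⟩
    ext n
    rw [PowerSeries.coeff_mk]
    exact stmt_forced q hq2 g u F h0 hF n
end

section
/- Work in (ℚ[[h]])[[X]] and set q := exp(h/2) ∈ ℚ[[h]] (the formal exponential series evaluated at h/2), a unit with inverse exp(−h/2). Then the equation (1 − q²X)·F(X)·F(q²X) = q·(1 − X) has exactly two solutions F ∈ (ℚ[[h]])[[X]]: namely F = f and F = −f, where f is the unique solution with constant term exp(h/4). (This makes precise the paper's claim that f(z)f(q²z) = d(q²z)⁻¹ has a unique solution f(z) ∈ B[[z]], B = ℂ[[h]], up to the choice of sign of the constant term q^{1/2}.) -/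
open PowerSeries Finset

/-- `q = exp(h/2) ∈ ℚ[[h]]`: the formal exponential series evaluated at `h/2`. -/
noncomputable def qExp : PowerSeries ℚ := PowerSeries.rescale (1/2 : ℚ) (PowerSeries.exp ℚ)

namespace Stmt2Aux

abbrev B := PowerSeries ℚ

noncomputable def e : B := PowerSeries.rescale (1/4 : ℚ) (PowerSeries.exp ℚ)
noncomputable def c : B := qExp ^ 2

lemma cc_rescale {R : Type*} [CommSemiring R] (a : R) (f : R⟦X⟧) :
    constantCoeff (rescale a f) = constantCoeff f := by
  rw [← coeff_zero_eq_constantCoeff_apply, coeff_rescale, pow_zero, one_mul,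
    coeff_zero_eq_constantCoeff_apply]

lemma cc_q : constantCoeff qExp = 1 := by
  rw [qExp, cc_rescale, constantCoeff_exp]

lemma cc_e : constantCoeff e = 1 := by
  rw [e, cc_rescale, constantCoeff_exp]

lemma cc_c : constantCoeff c = 1 := by
  rw [c, map_pow, cc_q, one_pow]

lemma e_sq : e * e = qExp := by
  rw [e, qExp, exp_mul_exp_eq_exp_add]
  norm_num

lemma q_ne : qExp ≠ 0 := fun h => by simpa [h] using cc_q

/-- `antidiagonal (n+1)` minus the two endpoints. -/
noncomputable def rest (n : ℕ) : Finset (ℕ × ℕ) :=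
  ((antidiagonal (n+1)).erase (0, n+1)).erase (n+1, 0)

lemma mem_rest {n : ℕ} {p : ℕ × ℕ} (hp : p ∈ rest n) :
    p.1 < n + 1 ∧ p.2 < n + 1 := by
  rw [rest, Finset.mem_erase, Finset.mem_erase, Finset.HasAntidiagonal.mem_antidiagonal] at hp
  obtain ⟨h1, h2, h3⟩ := hp
  constructor
  · rcases Nat.lt_or_ge p.1 (n+1) with h | h
    · exact h
    · exfalso; apply h1; have : p.1 = n + 1 := by omega
      have : p.2 = 0 := by omega
      exact Prod.ext (by omega) this
  · rcases Nat.lt_or_ge p.2 (n+1) with h | h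
    · exact h
    · exfalso; apply h2; have : p.2 = n + 1 := by omega
      exact Prod.ext (by omega) this

/-- The coefficients of the solution, defined recursively. -/
noncomputable def a : ℕ → B
  | 0 => e
  | n+1 => (e * (1 + c ^ (n+1)))⁻¹ *
      ((if n = 0 then -qExp else 0)
        + c * ∑ p ∈ (antidiagonal n).attach, a p.1.1 * a p.1.2 * c ^ p.1.2
        - ∑ p ∈ (rest n).attach, a p.1.1 * a p.1.2 * c ^ p.1.2)
  decreasing_by
  · have := Finset.HasAntidiagonal.mem_antidiagonal.mp p.2; omega
  · have := Finset.HasAntidiagonal.mem_antidiagonal.mp p.2; omega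
  · exact (mem_rest p.2).1
  · exact (mem_rest p.2).2

noncomputable def Sg (b : ℕ → B) (n : ℕ) : B :=
  ∑ p ∈ antidiagonal n, b p.1 * b p.2 * c ^ p.2

noncomputable def Tg (b : ℕ → B) (n : ℕ) : B :=
  ∑ p ∈ rest n, b p.1 * b p.2 * c ^ p.2

lemma a_succ (n : ℕ) : a (n+1) = (e * (1 + c ^ (n+1)))⁻¹ *
    ((if n = 0 then -qExp else 0) + c * Sg a n - Tg a n) := by
  rw [a, Sg, Tg, Finset.sum_attach (antidiagonal n) (fun p => a p.1 * a p.2 * c ^ p.2),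
    Finset.sum_attach (rest n) (fun p => a p.1 * a p.2 * c ^ p.2)]

lemma unit_cc (n : ℕ) : constantCoeff (e * (1 + c ^ (n+1))) ≠ 0 := by
  rw [map_mul, map_add, map_one, map_pow, cc_e, cc_c, one_pow]
  norm_num

lemma a_succ_mul (n : ℕ) : e * (1 + c ^ (n+1)) * a (n+1)
    = (if n = 0 then -qExp else 0) + c * Sg a n - Tg a n := by
  rw [a_succ, ← mul_assoc, PowerSeries.mul_inv_cancel _ (unit_cc n), one_mul]

lemma Sg_split (b : ℕ → B) (n : ℕ) :
    Sg b (n+1) = b 0 * b (n+1) * c ^ (n+1) + (b (n+1) * b 0 * c ^ 0 + Tg b n) := by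
  have h0 : (0, n+1) ∈ antidiagonal (n+1) := by simp [Finset.HasAntidiagonal.mem_antidiagonal]
  have h1 : (n+1, 0) ∈ (antidiagonal (n+1)).erase (0, n+1) := by
    rw [Finset.mem_erase]
    exact ⟨by simp, by simp [Finset.HasAntidiagonal.mem_antidiagonal]⟩
  rw [Sg, ← Finset.add_sum_erase _ _ h0, ← Finset.add_sum_erase _ _ h1]
  rfl

lemma S_zero : Sg a 0 = qExp := by
  simp [Sg, a, e_sq]

lemma S_rec (n : ℕ) : Sg a (n+1) = (if n = 0 then -qExp else 0) + c * Sg a n := by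
  have h := a_succ_mul n
  have h2 := Sg_split a (n+1-1)
  simp only [Nat.add_sub_cancel] at h2
  have ha0 : a 0 = e := by simp [a]
  rw [ha0] at h2
  rw [h2, pow_zero]
  linear_combination h

/-- The solution. -/
noncomputable def f : PowerSeries B := PowerSeries.mk a

lemma coeff_prod (F : PowerSeries B) (n : ℕ) :
    (coeff n) (F * rescale c F) = Sg (fun k => coeff k F) n := by
  rw [coeff_mul, Sg]
  refine Finset.sum_congr rfl fun p _ => ?_
  rw [coeff_rescale]
  ring

lemma expand (F : PowerSeries B) :
    (1 - PowerSeries.C c * X) * F * rescale c F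
      = F * rescale c F - PowerSeries.C c * (X * (F * rescale c F)) := by
  ring

lemma coeff_rhs (n : ℕ) : (coeff n) (PowerSeries.C qExp * (1 - X))
    = (if n = 0 then qExp else 0) - (if n = 1 then qExp else 0) := by
  rw [mul_sub, mul_one, map_sub, coeff_C]
  rcases n with _ | n
  · simp
  · simp [PowerSeries.coeff_C_mul, PowerSeries.coeff_X]
    rcases n with _ | n <;> simp

lemma coeff_lhs (F : PowerSeries B) (n : ℕ) :
    (coeff n) ((1 - PowerSeries.C c * X) * F * rescale c F)
      = Sg (fun k => coeff k F) n
        - (if n = 0 then 0 else c * Sg (fun k => coeff k F) (n-1)) := by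
  rw [expand, map_sub, coeff_prod, PowerSeries.coeff_C_mul]
  rcases n with _ | n
  · simp [PowerSeries.coeff_zero_eq_constantCoeff, map_mul, PowerSeries.constantCoeff_X]
  · rw [PowerSeries.coeff_succ_X_mul, coeff_prod]
    simp

lemma f_eqn : (1 - PowerSeries.C c * X) * f * rescale c f
    = PowerSeries.C qExp * (1 - X) := by
  ext n
  rw [coeff_lhs, coeff_rhs]
  have hS : (fun k => coeff k f) = a := by
    funext k; simp [f]
  rw [hS]
  rcases n with _ | n
  · simp [S_zero]
  · rw [S_rec n]
    rcases n with _ | n <;> simp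

lemma isUnit_w : IsUnit (1 - PowerSeries.C c * X) := by
  rw [PowerSeries.isUnit_iff_constantCoeff]
  have : constantCoeff (1 - PowerSeries.C c * X) = 1 := by
    simp [map_sub, map_mul, PowerSeries.constantCoeff_X]
  rw [this]
  exact isUnit_one

lemma cc_sq (F : PowerSeries B)
    (hF : (1 - PowerSeries.C c * X) * F * rescale c F
      = PowerSeries.C qExp * (1 - X)) :
    constantCoeff F * constantCoeff F = qExp := by
  have := congrArg (constantCoeff) hF
  simpa [map_mul, map_sub, PowerSeries.constantCoeff_X, cc_rescale] using this

lemma cc_ne (F : PowerSeries B)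
    (hF : (1 - PowerSeries.C c * X) * F * rescale c F
      = PowerSeries.C qExp * (1 - X)) :
    constantCoeff F ≠ 0 := by
  intro h
  apply q_ne
  have := cc_sq F hF
  rw [h, mul_zero] at this
  exact this.symm

lemma one_add_c_pow_ne (n : ℕ) : (1 : B) + c ^ n ≠ 0 := by
  intro h
  have := congrArg (constantCoeff) h
  rw [map_add, map_one, map_pow, cc_c, one_pow, map_zero] at this
  norm_num at this

lemma uniq (F G : PowerSeries B)
    (hF : (1 - PowerSeries.C c * X) * F * rescale c F
      = PowerSeries.C qExp * (1 - X))
    (hG : (1 - PowerSeries.C c * X) * G * rescale c G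
      = PowerSeries.C qExp * (1 - X))
    (h0 : constantCoeff F = constantCoeff G) : F = G := by
  have key : F * rescale c F = G * rescale c G := by
    apply isUnit_w.mul_left_cancel
    rw [← mul_assoc, ← mul_assoc, hF, hG]
  have hG0 : constantCoeff G ≠ 0 := cc_ne G hG
  refine PowerSeries.ext fun n => ?_
  induction n using Nat.strong_induction_on with
  | _ n ih =>
    rcases n with _ | n
    · simpa [PowerSeries.coeff_zero_eq_constantCoeff] using h0
    · have hc := congrArg (coeff (n+1)) key
      rw [coeff_prod, coeff_prod, Sg_split, Sg_split] at hc
      have hT : Tg (fun k => coeff k F) n = Tg (fun k => coeff k G) n := by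
        refine Finset.sum_congr rfl fun p hp => ?_
        have := mem_rest hp
        simp only [ih p.1 this.1, ih p.2 this.2]
      have h00 : coeff 0 F = coeff 0 G := by
        simpa [PowerSeries.coeff_zero_eq_constantCoeff] using h0
      rw [hT, h00] at hc
      have hfac : (coeff (n+1) F - coeff (n+1) G)
          * (coeff 0 G * (1 + c ^ (n+1))) = 0 := by
        rw [pow_zero] at hc
        linear_combination hc
      rcases mul_eq_zero.mp hfac with h | h
      · exact sub_eq_zero.mp h
      · exfalso
        rcases mul_eq_zero.mp h with h | h
        · exact hG0 (by simpa [PowerSeries.coeff_zero_eq_constantCoeff] using h)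
        · exact one_add_c_pow_ne (n+1) h

lemma cc_f : constantCoeff f = e := by
  rw [← PowerSeries.coeff_zero_eq_constantCoeff_apply, f, PowerSeries.coeff_mk]
  simp [a]

lemma neg_sol (F : PowerSeries B)
    (hF : (1 - PowerSeries.C c * X) * F * rescale c F
      = PowerSeries.C qExp * (1 - X)) :
    (1 - PowerSeries.C c * X) * (-F) * rescale c (-F)
      = PowerSeries.C qExp * (1 - X) := by
  rw [map_neg, ← hF]; ring

end Stmt2Aux

open Stmt2Aux

/-- In `(ℚ[[h]])[[X]]` with `q = exp(h/2)`, the equation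
`(1 − q²X)·F(X)·F(q²X) = q·(1 − X)` has exactly two solutions: `F = f` and `F = −f`,
where `f` is the unique solution with constant term `exp(h/4)`. -/
theorem stmt_2 :
    ∃ f : PowerSeries (PowerSeries ℚ),
      (PowerSeries.constantCoeff f
          = PowerSeries.rescale (1/4 : ℚ) (PowerSeries.exp ℚ) ∧
        (1 - PowerSeries.C (qExp ^ 2) * PowerSeries.X) * f
            * PowerSeries.rescale (qExp ^ 2) f
          = PowerSeries.C qExp * (1 - PowerSeries.X)) ∧
      f ≠ -f ∧
      ∀ F : PowerSeries (PowerSeries ℚ),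
        (1 - PowerSeries.C (qExp ^ 2) * PowerSeries.X) * F
            * PowerSeries.rescale (qExp ^ 2) F
          = PowerSeries.C qExp * (1 - PowerSeries.X)
        ↔ (F = f ∨ F = -f) := by
  refine ⟨Stmt2Aux.f, ⟨cc_f, f_eqn⟩, ?_, ?_⟩
  · intro h
    have h1 := congrArg (constantCoeff) h
    rw [map_neg, cc_f] at h1
    have h2 := congrArg (constantCoeff) h1
    rw [map_neg, cc_e] at h2
    norm_num at h2
  · intro F
    constructor
    · intro hF
      have hsq := cc_sq F hF
      have hsq' : (constantCoeff F - e) * (constantCoeff F + e) = 0 := by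
        have he := e_sq
        linear_combination hsq - he
      rcases mul_eq_zero.mp hsq' with h | h
      · left
        exact uniq F Stmt2Aux.f hF f_eqn (by rw [cc_f]; exact sub_eq_zero.mp h)
      · right
        have hneg : constantCoeff (-F) = e := by
          rw [map_neg]; linear_combination -h
        have := uniq (-F) Stmt2Aux.f (neg_sol F hF) f_eqn (by rw [cc_f, hneg])
        rw [← this]; ring
    · rintro (rfl | rfl)
      · exact f_eqn
      · exact neg_sol _ f_eqn
end

section
/- In (ℚ[[q]])[[z]] with the topology of coefficientwise convergence, define g̃ := (∏_{j≥0}(1 − q^{4+4j}·z)) · (∏_{j≥0}(1 − q^{2+4j}·z))⁻¹, where q is the variable of the coefficient ring ℚ[[q]], both families are multipliable, and the second product is invertible because its constant term is 1. Then g̃(z)·g̃(q²z)·(1 − q²z) = 1, where g̃(q²z) denotes the rescaling z ↦ q²z applied to g̃. -/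
section Stmt3Aux

open PowerSeries Filter Finset

noncomputable local instance : TopologicalSpace ℚ := ⊥
local instance : DiscreteTopology ℚ := ⟨rfl⟩
noncomputable local instance : TopologicalSpace (PowerSeries ℚ) := coeffwiseTopology ℚ
noncomputable local instance : TopologicalSpace (PowerSeries (PowerSeries ℚ)) :=
  coeffwiseTopology (PowerSeries ℚ)
local instance : T2Space (PowerSeries ℚ) :=
  inferInstanceAs (T2Space ((Unit →₀ ℕ) → ℚ))
local instance : T2Space (PowerSeries (PowerSeries ℚ)) :=
  inferInstanceAs (T2Space ((Unit →₀ ℕ) → PowerSeries ℚ))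

local notation "A" => PowerSeries ℚ
local notation "S" => PowerSeries (PowerSeries ℚ)

lemma stmt3_tendsto_char_A {α : Type*} {l : Filter α} {F : α → A} {L : A} :
    Filter.Tendsto F l (nhds L) ↔
      ∀ m : ℕ, ∀ᶠ x in l, PowerSeries.coeff (R := ℚ) m (F x) = PowerSeries.coeff (R := ℚ) m L := by
  have h := @tendsto_pi_nhds α (Unit →₀ ℕ) (fun _ => ℚ) _ F L l
  constructor
  · intro hF m
    have h2 := h.mp hF (Finsupp.single () m)
    rw [nhds_discrete] at h2
    exact tendsto_pure.mp h2
  · intro hF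
    apply h.mpr
    intro d
    rw [nhds_discrete]
    rw [tendsto_pure]
    rw [Finsupp.unique_single d]
    exact hF (d ())

lemma stmt3_tendsto_char {α : Type*} {l : Filter α} {F : α → S} {L : S} :
    Filter.Tendsto F l (nhds L) ↔
      ∀ n m : ℕ, ∀ᶠ x in l,
        PowerSeries.coeff (R := ℚ) m (PowerSeries.coeff (R := A) n (F x)) =
        PowerSeries.coeff (R := ℚ) m (PowerSeries.coeff (R := A) n L) := by
  have h := @tendsto_pi_nhds α (Unit →₀ ℕ) (fun _ => A) _ F L l
  constructor
  · intro hF n m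
    have h2 := h.mp hF (Finsupp.single () n)
    exact stmt3_tendsto_char_A.mp h2 m
  · intro hF
    apply h.mpr
    intro d
    rw [Finsupp.unique_single d]
    exact stmt3_tendsto_char_A.mpr (hF (d ()))


lemma stmt3_coeff_mul_eq_zero {c : A} {m : ℕ} (hc : ∀ j ≤ m, PowerSeries.coeff (R := ℚ) j c = 0)
    (w : A) : PowerSeries.coeff (R := ℚ) m (c * w) = 0 := by
  rw [PowerSeries.coeff_mul]
  refine Finset.sum_eq_zero fun p hp => ?_
  rw [hc p.1 (Finset.HasAntidiagonal.antidiagonal.fst_le hp), zero_mul]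

/-- coefficient congruence at A level -/
lemma stmt3_coeff_mul_congr_A {m : ℕ} {u u' : A} (w : A)
    (h : ∀ k ≤ m, PowerSeries.coeff (R := ℚ) k u = PowerSeries.coeff (R := ℚ) k u') :
    PowerSeries.coeff (R := ℚ) m (w * u) = PowerSeries.coeff (R := ℚ) m (w * u') := by
  rw [PowerSeries.coeff_mul, PowerSeries.coeff_mul]
  exact Finset.sum_congr rfl fun p hp => by
    rw [h p.2 (Finset.HasAntidiagonal.antidiagonal.snd_le hp)]

/-- coefficient congruence at S level -/
lemma stmt3_coeff_mul_congr {n m : ℕ} {φ ψ : S} (g : S)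
    (h : ∀ n' ≤ n, ∀ m' ≤ m,
      PowerSeries.coeff (R := ℚ) m' (PowerSeries.coeff (R := A) n' φ) =
      PowerSeries.coeff (R := ℚ) m' (PowerSeries.coeff (R := A) n' ψ)) :
    PowerSeries.coeff (R := ℚ) m (PowerSeries.coeff (R := A) n (g * φ)) =
    PowerSeries.coeff (R := ℚ) m (PowerSeries.coeff (R := A) n (g * ψ)) := by
  rw [PowerSeries.coeff_mul, map_sum, PowerSeries.coeff_mul, map_sum]
  refine Finset.sum_congr rfl fun p hp => ?_
  exact stmt3_coeff_mul_congr_A _ fun k hk =>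
    h p.2 (Finset.HasAntidiagonal.antidiagonal.snd_le hp) k hk

lemma stmt3_prod_mul_coeff (a : ℕ → A)
    (ha : ∀ i m, m ≤ i → PowerSeries.coeff (R := ℚ) m (a i) = 0) (m : ℕ) (t : Finset ℕ)
    (ht : ∀ i ∈ t, m < i) (g : S) (n : ℕ) :
    PowerSeries.coeff (R := ℚ) m (PowerSeries.coeff (R := A) n
      ((∏ i ∈ t, (1 - PowerSeries.C (R := A) (a i) * PowerSeries.X)) * g)) =
    PowerSeries.coeff (R := ℚ) m (PowerSeries.coeff (R := A) n g) := by
  classical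
  induction t using Finset.induction_on generalizing g with
  | empty => simp
  | @insert i t hi ih =>
    have h1 : (∏ j ∈ insert i t, (1 - PowerSeries.C (R := A) (a j) * PowerSeries.X)) * g
        = (∏ j ∈ t, (1 - PowerSeries.C (R := A) (a j) * PowerSeries.X)) *
          ((1 - PowerSeries.C (R := A) (a i) * PowerSeries.X) * g) := by
      rw [Finset.prod_insert hi]; ring
    rw [h1, ih (fun j hj => ht j (Finset.mem_insert_of_mem hj)) _]
    have h2 : (1 - PowerSeries.C (R := A) (a i) * PowerSeries.X) * g
        = g - PowerSeries.C (R := A) (a i) * (PowerSeries.X * g) := by ring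
    rw [h2, map_sub, map_sub, PowerSeries.coeff_C_mul]
    rw [stmt3_coeff_mul_eq_zero (fun j hj =>
      ha i j (le_of_lt (lt_of_le_of_lt hj (ht i (Finset.mem_insert_self i t))))) _]
    ring

lemma stmt3_coeff_prod_stable (a : ℕ → A)
    (ha : ∀ i m, m ≤ i → PowerSeries.coeff (R := ℚ) m (a i) = 0) (m n : ℕ) {s : Finset ℕ}
    (hs : Finset.range (m + 1) ⊆ s) :
    PowerSeries.coeff (R := ℚ) m (PowerSeries.coeff (R := A) n
      (∏ i ∈ s, (1 - PowerSeries.C (R := A) (a i) * PowerSeries.X))) =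
    PowerSeries.coeff (R := ℚ) m (PowerSeries.coeff (R := A) n
      (∏ i ∈ Finset.range (m + 1), (1 - PowerSeries.C (R := A) (a i) * PowerSeries.X))) := by
  have hst : s = (s \ Finset.range (m + 1)) ∪ Finset.range (m + 1) := by
    rw [Finset.sdiff_union_self_eq_union, Finset.union_eq_left.mpr hs]
  rw [hst, Finset.prod_union Finset.sdiff_disjoint]
  refine stmt3_prod_mul_coeff a ha m _ (fun i hi => ?_) _ n
  have := (Finset.mem_sdiff.mp hi).2
  simp only [Finset.mem_range, not_lt] at this
  omega

noncomputable def stmt3_limitProd (a : ℕ → A) : S :=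
  PowerSeries.mk fun n => PowerSeries.mk fun m =>
    PowerSeries.coeff (R := ℚ) m (PowerSeries.coeff (R := A) n
      (∏ i ∈ Finset.range (m + 1), (1 - PowerSeries.C (R := A) (a i) * PowerSeries.X)))

lemma stmt3_coeff_limitProd (a : ℕ → A)
    (ha : ∀ i m, m ≤ i → PowerSeries.coeff (R := ℚ) m (a i) = 0) (n m : ℕ) {s : Finset ℕ}
    (hs : Finset.range (m + 1) ⊆ s) :
    PowerSeries.coeff (R := ℚ) m (PowerSeries.coeff (R := A) n (stmt3_limitProd a)) =
    PowerSeries.coeff (R := ℚ) m (PowerSeries.coeff (R := A) n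
      (∏ i ∈ s, (1 - PowerSeries.C (R := A) (a i) * PowerSeries.X))) := by
  rw [stmt3_limitProd, PowerSeries.coeff_mk, PowerSeries.coeff_mk,
    stmt3_coeff_prod_stable a ha m n hs]

lemma stmt3_hasProd (a : ℕ → A)
    (ha : ∀ i m, m ≤ i → PowerSeries.coeff (R := ℚ) m (a i) = 0) :
    HasProd (fun i => 1 - PowerSeries.C (R := A) (a i) * PowerSeries.X) (stmt3_limitProd a) :=
  stmt3_tendsto_char.mpr fun n m => Filter.eventually_atTop.mpr
    ⟨Finset.range (m + 1), fun _ hs => (stmt3_coeff_limitProd a ha n m hs).symm⟩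


lemma stmt3_rescale_factor (c b : A) :
    PowerSeries.rescale c (1 - PowerSeries.C (R := A) b * PowerSeries.X) =
      1 - PowerSeries.C (R := A) (c * b) * PowerSeries.X := by
  ext n
  simp only [map_sub, PowerSeries.coeff_rescale, PowerSeries.coeff_one,
    PowerSeries.coeff_C_mul, PowerSeries.coeff_X]
  rcases n with _ | n
  · simp
  · rcases n with _ | n
    · simp
    · simp

lemma stmt3_rescale_limitProd (c : A) (a : ℕ → A)
    (ha : ∀ i m, m ≤ i → PowerSeries.coeff (R := ℚ) m (a i) = 0) :
    PowerSeries.rescale c (stmt3_limitProd a) = stmt3_limitProd (fun j => c * a j) := by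
  ext n m
  rw [PowerSeries.coeff_rescale]
  have h1 : ∀ k ≤ m, PowerSeries.coeff (R := ℚ) k (PowerSeries.coeff (R := A) n (stmt3_limitProd a)) =
      PowerSeries.coeff (R := ℚ) k (PowerSeries.coeff (R := A) n
        (∏ i ∈ Finset.range (m + 1), (1 - PowerSeries.C (R := A) (a i) * PowerSeries.X))) :=
    fun k hk => stmt3_coeff_limitProd a ha n k
      (Finset.range_subset_range.mpr (by omega))
  rw [stmt3_coeff_mul_congr_A (c ^ n) h1]
  have h2 : (∏ i ∈ Finset.range (m + 1), (1 - PowerSeries.C (R := A) (c * a i) * PowerSeries.X))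
      = PowerSeries.rescale c
        (∏ i ∈ Finset.range (m + 1), (1 - PowerSeries.C (R := A) (a i) * PowerSeries.X)) := by
    rw [map_prod]
    exact Finset.prod_congr rfl fun i _ => (stmt3_rescale_factor c (a i)).symm
  rw [stmt3_limitProd, PowerSeries.coeff_mk, PowerSeries.coeff_mk, h2,
    PowerSeries.coeff_rescale]

lemma stmt3_limitProd_succ (a : ℕ → A)
    (ha : ∀ i m, m ≤ i → PowerSeries.coeff (R := ℚ) m (a i) = 0) :
    stmt3_limitProd a = (1 - PowerSeries.C (R := A) (a 0) * PowerSeries.X) *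
      stmt3_limitProd (fun j => a (j + 1)) := by
  have ha' : ∀ i m, m ≤ i → PowerSeries.coeff (R := ℚ) m (a (i + 1)) = 0 :=
    fun i m h => ha (i + 1) m (h.trans (Nat.le_succ i))
  ext n m
  rw [stmt3_coeff_limitProd a ha n m
    (Finset.range_subset_range.mpr (by omega : m + 1 ≤ m + 2))]
  rw [stmt3_coeff_mul_congr (n := n) (m := m)
    (1 - PowerSeries.C (R := A) (a 0) * PowerSeries.X)
    (fun n' _ m' hm' => stmt3_coeff_limitProd (fun j => a (j + 1)) ha' n' m'
      (s := Finset.range (m + 1)) (Finset.range_subset_range.mpr (by omega)))]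
  have hpr : (∏ i ∈ Finset.range (m + 2), (1 - PowerSeries.C (R := A) (a i) * PowerSeries.X))
      = (1 - PowerSeries.C (R := A) (a 0) * PowerSeries.X) *
        ∏ i ∈ Finset.range (m + 1), (1 - PowerSeries.C (R := A) (a (i + 1)) * PowerSeries.X) := by
    rw [Finset.prod_range_succ']
    ring
  rw [hpr]

lemma stmt3_coeff_zero_limitProd (a : ℕ → A) :
    PowerSeries.coeff (R := A) 0 (stmt3_limitProd a) = 1 := by
  ext m
  rw [stmt3_limitProd, PowerSeries.coeff_mk, PowerSeries.coeff_mk]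
  have : PowerSeries.coeff (R := A) 0
      (∏ i ∈ Finset.range (m + 1), (1 - PowerSeries.C (R := A) (a i) * PowerSeries.X)) = 1 := by
    rw [PowerSeries.coeff_zero_eq_constantCoeff, map_prod]
    simp
  rw [this]


lemma stmt3_ha4 : ∀ i m, m ≤ i →
    PowerSeries.coeff (R := ℚ) m ((PowerSeries.X : A) ^ (4 + 4 * i)) = 0 := by
  intro i m h
  rw [PowerSeries.coeff_X_pow, if_neg (by omega)]

lemma stmt3_ha2 : ∀ i m, m ≤ i →
    PowerSeries.coeff (R := ℚ) m ((PowerSeries.X : A) ^ (2 + 4 * i)) = 0 := by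
  intro i m h
  rw [PowerSeries.coeff_X_pow, if_neg (by omega)]

/-- In `(ℚ[[q]])[[z]]` with the topology of coefficientwise convergence
(`ℚ` discrete), set `g̃ = (∏_{j≥0}(1 − q^(4+4j)z)) · (∏_{j≥0}(1 − q^(2+4j)z))⁻¹`; both
families are multipliable and the second product is a unit (its constant term is `1`, and
`Ring.inverse` is its genuine inverse). Then `g̃(z)·g̃(q²z)·(1 − q²z) = 1`. -/
theorem stmt_3 :
    letI : TopologicalSpace ℚ := ⊥
    letI : TopologicalSpace (PowerSeries ℚ) := coeffwiseTopology ℚ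
    letI : TopologicalSpace (PowerSeries (PowerSeries ℚ)) := coeffwiseTopology (PowerSeries ℚ)
    let q : PowerSeries ℚ := PowerSeries.X
    let P4 : PowerSeries (PowerSeries ℚ) :=
      ∏' j : ℕ, (1 - PowerSeries.C (R := PowerSeries ℚ) (q ^ (4 + 4 * j)) * PowerSeries.X)
    let P2 : PowerSeries (PowerSeries ℚ) :=
      ∏' j : ℕ, (1 - PowerSeries.C (R := PowerSeries ℚ) (q ^ (2 + 4 * j)) * PowerSeries.X)
    let gt : PowerSeries (PowerSeries ℚ) := P4 * Ring.inverse P2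
    (Multipliable fun j : ℕ =>
      (1 - PowerSeries.C (R := PowerSeries ℚ) (q ^ (4 + 4 * j)) * PowerSeries.X)) ∧
    (Multipliable fun j : ℕ =>
      (1 - PowerSeries.C (R := PowerSeries ℚ) (q ^ (2 + 4 * j)) * PowerSeries.X)) ∧
    IsUnit P2 ∧
    gt * PowerSeries.rescale (q ^ 2) gt *
        (1 - PowerSeries.C (R := PowerSeries ℚ) (q ^ 2) * PowerSeries.X) = 1 := by
  intro q P4 P2 gt
  have h4 := stmt3_hasProd (fun j => (PowerSeries.X : A) ^ (4 + 4 * j)) stmt3_ha4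
  have h2 := stmt3_hasProd (fun j => (PowerSeries.X : A) ^ (2 + 4 * j)) stmt3_ha2
  have hP4 : P4 = stmt3_limitProd (fun j => (PowerSeries.X : A) ^ (4 + 4 * j)) :=
    h4.tprod_eq
  have hP2 : P2 = stmt3_limitProd (fun j => (PowerSeries.X : A) ^ (2 + 4 * j)) :=
    h2.tprod_eq
  have hunit : IsUnit P2 := by
    rw [hP2, PowerSeries.isUnit_iff_constantCoeff,
      ← PowerSeries.coeff_zero_eq_constantCoeff_apply, stmt3_coeff_zero_limitProd]
    exact isUnit_one
  refine ⟨⟨_, h4⟩, ⟨_, h2⟩, hunit, ?_⟩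
  have key1 : PowerSeries.rescale ((PowerSeries.X : A) ^ 2)
      (stmt3_limitProd (fun j => (PowerSeries.X : A) ^ (2 + 4 * j))) =
      stmt3_limitProd (fun j => (PowerSeries.X : A) ^ (4 + 4 * j)) := by
    rw [stmt3_rescale_limitProd _ _ stmt3_ha2]
    have hfun : (fun j => (PowerSeries.X : A) ^ 2 * (PowerSeries.X : A) ^ (2 + 4 * j))
        = fun j => (PowerSeries.X : A) ^ (4 + 4 * j) := by
      funext j
      rw [← pow_add]
      congr 1
      omega
    rw [hfun]
  have key2 : stmt3_limitProd (fun j => (PowerSeries.X : A) ^ (2 + 4 * j)) =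
      (1 - PowerSeries.C (R := A) ((PowerSeries.X : A) ^ 2) * PowerSeries.X) *
        PowerSeries.rescale ((PowerSeries.X : A) ^ 2)
          (stmt3_limitProd (fun j => (PowerSeries.X : A) ^ (4 + 4 * j))) := by
    rw [stmt3_limitProd_succ _ stmt3_ha2, stmt3_rescale_limitProd _ _ stmt3_ha4]
    have hfun : (fun j => (PowerSeries.X : A) ^ 2 * (PowerSeries.X : A) ^ (4 + 4 * j))
        = fun j => (PowerSeries.X : A) ^ (2 + 4 * (j + 1)) := by
      funext j
      rw [← pow_add]
      congr 1
      omega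
    rw [hfun]
  have hunit' : IsUnit (stmt3_limitProd (fun j => (PowerSeries.X : A) ^ (2 + 4 * j))) :=
    hP2 ▸ hunit
  have hvG : Ring.inverse (stmt3_limitProd (fun j => (PowerSeries.X : A) ^ (2 + 4 * j))) *
      stmt3_limitProd (fun j => (PowerSeries.X : A) ^ (2 + 4 * j)) = 1 :=
    Ring.inverse_mul_cancel _ hunit'
  show P4 * Ring.inverse P2 *
      PowerSeries.rescale ((PowerSeries.X : A) ^ 2) (P4 * Ring.inverse P2) *
      (1 - PowerSeries.C (R := A) ((PowerSeries.X : A) ^ 2) * PowerSeries.X) = 1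
  rw [hP4, hP2, map_mul]
  set G4 := stmt3_limitProd (fun j => (PowerSeries.X : A) ^ (4 + 4 * j)) with hG4
  set G2 := stmt3_limitProd (fun j => (PowerSeries.X : A) ^ (2 + 4 * j)) with hG2
  set v := Ring.inverse G2 with hvdef
  calc G4 * v * (PowerSeries.rescale ((PowerSeries.X : A) ^ 2) G4 *
          PowerSeries.rescale ((PowerSeries.X : A) ^ 2) v) *
        (1 - PowerSeries.C (R := A) ((PowerSeries.X : A) ^ 2) * PowerSeries.X)
      = (v * ((1 - PowerSeries.C (R := A) ((PowerSeries.X : A) ^ 2) * PowerSeries.X) *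
          PowerSeries.rescale ((PowerSeries.X : A) ^ 2) G4)) *
        (PowerSeries.rescale ((PowerSeries.X : A) ^ 2) v *
          PowerSeries.rescale ((PowerSeries.X : A) ^ 2) G2) := by
        rw [key1]; ring
    _ = (v * G2) * (PowerSeries.rescale ((PowerSeries.X : A) ^ 2) (v * G2)) := by
        rw [← key2, ← map_mul]
    _ = 1 := by rw [hvG, map_one, mul_one]

end Stmt3Aux
end

section
/- Work in (ℚ[[h]])[[X]] and set q := exp(h/2) ∈ ℚ[[h]]. Let f ∈ (ℚ[[h]])[[X]] be the unique power series with constant term exp(h/4) satisfying (1 − q²X)·f(X)·f(q²X) = q·(1 − X), and let Λ ∈ (ℚ[[h]])[[X]] be the power series whose constant coefficient is 1/4 and whose n-th coefficient is 1/2 for all n ≥ 1. Then f ≡ 1 + h·Λ (mod h²), i.e. every X-coefficient of f − 1 − h·Λ is divisible by h² in ℚ[[h]]. (Λ is the power series expansion of λ(z) = (1+z)/(4(1−z)); this is the entry R₁₁ = f(z) of the claim that the quantum R-matrix satisfies R(z) = 1 + h·r(z) + O(h²) with classical r-matrix diagonal entries λ(z).) -/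
/-- `Λ ∈ (ℚ[[h]])[[X]]`: constant coefficient `1/4`, all higher coefficients `1/2`;
the expansion of `λ(z) = (1+z)/(4(1−z))`. -/
noncomputable def Lam : PowerSeries (PowerSeries ℚ) :=
  PowerSeries.mk fun n => if n = 0 then PowerSeries.C (R := ℚ) (1/4) else PowerSeries.C (R := ℚ) (1/2)

open PowerSeries TrivSqZeroExt

noncomputable def phi : PowerSeries ℚ →+* DualNumber ℚ where
  toFun p := (PowerSeries.coeff (R := ℚ) 0 p, PowerSeries.coeff (R := ℚ) 1 p)
  map_one' := by ext <;> simp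
  map_zero' := by ext <;> simp
  map_add' p q := by ext <;> simp <;> rfl
  map_mul' p q := by
    ext
    · simp [fst_mul, coeff_mul, Finset.HasAntidiagonal.antidiagonal]; rfl
    · simp [snd_mul, PowerSeries.coeff_mul, Finset.Nat.sum_antidiagonal_eq_sum_range_succ_mk,
        Finset.sum_range_succ, smul_eq_mul, mul_comm]
      erw [snd_mul]; simp [mul_comm]


lemma fst_phi (p : PowerSeries ℚ) : (phi p).fst = PowerSeries.coeff (R := ℚ) 0 p := rfl
lemma snd_phi (p : PowerSeries ℚ) : (phi p).snd = PowerSeries.coeff (R := ℚ) 1 p := rfl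

lemma X_sq_dvd_iff_phi (p : PowerSeries ℚ) :
    (PowerSeries.X : PowerSeries ℚ) ^ 2 ∣ p ↔ phi p = 0 := by
  rw [PowerSeries.X_pow_dvd_iff]
  constructor
  · intro h
    ext
    · rw [fst_phi]; exact h 0 (by norm_num)
    · rw [snd_phi]; exact h 1 (by norm_num)
  · intro h m hm
    have h0 := congrArg fst h
    have h1 := congrArg snd h
    rw [fst_phi] at h0
    rw [snd_phi] at h1
    interval_cases m
    · simpa using h0
    · simpa using h1

lemma map_rescale (c : PowerSeries ℚ) (f : PowerSeries (PowerSeries ℚ)) :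
    PowerSeries.map phi (PowerSeries.rescale c f)
      = PowerSeries.rescale (phi c) (PowerSeries.map phi f) := by
  refine PowerSeries.ext fun n => ?_
  rw [PowerSeries.coeff_map, PowerSeries.coeff_rescale, PowerSeries.coeff_rescale,
    PowerSeries.coeff_map, map_mul, map_pow]

lemma phi_rescale_exp (c : ℚ) :
    phi (PowerSeries.rescale c (PowerSeries.exp ℚ)) = 1 + inr c := by
  ext
  · rw [fst_phi]; simp [PowerSeries.coeff_rescale, PowerSeries.coeff_exp]
  · rw [snd_phi]; simp [PowerSeries.coeff_rescale, PowerSeries.coeff_exp]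

lemma phi_qExp : phi qExp = 1 + inr (1/2) := phi_rescale_exp _

lemma phi_qExp_sq : phi (qExp ^ 2) = 1 + DualNumber.eps := by
  rw [map_pow, phi_qExp, DualNumber.eps, pow_two]
  have h2 : ((1:ℚ)/2) + 1/2 = 1 := by norm_num
  rw [mul_add, mul_one, add_mul, one_mul, inr_mul_inr]
  rw [add_zero, add_assoc, ← inr_add, h2]

lemma phi_h : phi (PowerSeries.X : PowerSeries ℚ) = DualNumber.eps := by
  rw [DualNumber.eps]
  ext
  · rw [fst_phi]; simp
  · rw [snd_phi]; simp

lemma phi_C (r : ℚ) : phi (PowerSeries.C (R := ℚ) r) = inl r := by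
  ext
  · rw [fst_phi]; simp
  · rw [snd_phi]; simp

open PowerSeries in
lemma uniq {R : Type*} [CommRing R] (u : R) (F G E : PowerSeries R)
    (hunit : ∀ n : ℕ, 1 ≤ n → IsUnit (constantCoeff (R := R) F * (1 + u ^ n)))
    (hc : constantCoeff (R := R) F = constantCoeff (R := R) G)
    (hF : (1 - C (R := R) u * X) * (F * rescale u F) = E)
    (hG : (1 - C (R := R) u * X) * (G * rescale u G) = E) : F = G := by
  have hu : IsUnit (1 - C (R := R) u * X : PowerSeries R) := by
    rw [PowerSeries.isUnit_iff_constantCoeff]; simp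
  have hFG : F * rescale u F = G * rescale u G := hu.mul_left_cancel (hF.trans hG.symm)
  ext n
  induction n using Nat.strong_induction_on with
  | _ n ih =>
    match n with
    | 0 => simpa using congrArg (coeff (R := R) 0) (congrArg (PowerSeries.C (R := R)) hc)
    | (k + 1) =>
      set m := k + 1 with hm
      have hm1 : 1 ≤ m := by omega
      have hcoeff := congrArg (coeff (R := R) m) hFG
      rw [coeff_mul, coeff_mul, Finset.Nat.sum_antidiagonal_eq_sum_range_succ_mk,
        Finset.Nat.sum_antidiagonal_eq_sum_range_succ_mk] at hcoeff
      simp only [coeff_rescale] at hcoeff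
      set d : ℕ → R := fun i => coeff (R := R) i F * (u ^ (m - i) * coeff (R := R) (m - i) F)
        - coeff (R := R) i G * (u ^ (m - i) * coeff (R := R) (m - i) G) with hd
      have hsum0 : ∑ i ∈ Finset.range (m + 1), d i = 0 := by
        rw [hd, Finset.sum_sub_distrib, sub_eq_zero]
        exact hcoeff
      have hmid : ∀ i ∈ Finset.range m, i ≠ 0 → d i = 0 := by
        intro i hi hi0
        have hi' := Finset.mem_range.mp hi
        simp only [hd]
        rw [ih i (by omega), ih (m - i) (by omega), sub_self]
      have hsum : d 0 + d m = 0 := by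
        rw [Finset.sum_range_succ, Finset.sum_eq_single_of_mem 0
          (Finset.mem_range.mpr (by omega)) hmid] at hsum0
        exact hsum0
      have h0 : coeff (R := R) 0 F = coeff (R := R) 0 G := ih 0 (by omega)
      have hcF : constantCoeff (R := R) F = coeff (R := R) 0 F := (coeff_zero_eq_constantCoeff_apply F).symm
      have hz : (coeff (R := R) m F - coeff (R := R) m G) * (constantCoeff (R := R) F * (1 + u ^ m)) = 0 := by
        rw [hcF]
        rw [hd] at hsum
        simp only [Nat.sub_self, Nat.sub_zero, pow_zero, one_mul] at hsum
        linear_combination hsum - (coeff (R := R) m G * (1 + u ^ m)) * h0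
      have hx : coeff (R := R) m F - coeff (R := R) m G = 0 :=
        (hunit m hm1).mul_left_cancel (by rw [mul_zero, mul_comm]; exact hz)
      exact sub_eq_zero.mp hx

open PowerSeries DualNumber in
noncomputable def LD : PowerSeries (DualNumber ℚ) := PowerSeries.map phi Lam

open PowerSeries DualNumber in
lemma coeff_LD (n : ℕ) :
    coeff (R := DualNumber ℚ) n LD = inl (if n = 0 then (1/4 : ℚ) else 1/2) := by
  rw [LD, coeff_map, Lam, coeff_mk]
  split <;> simp [phi_C]

open PowerSeries DualNumber in
lemma constantCoeff_LD : constantCoeff (R := DualNumber ℚ) LD = inl (1/4 : ℚ) := by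
  simpa using coeff_LD 0

open PowerSeries DualNumber in
lemma key_identity :
    LD - X * LD = C (R := DualNumber ℚ) (inl (1/4 : ℚ)) * (1 + X) := by
  refine PowerSeries.ext fun n => ?_
  match n with
  | 0 => simp [constantCoeff_LD]
  | 1 =>
    have h : (1/2 : ℚ) = 1/4 + 1/4 := by norm_num
    simp only [map_sub, coeff_LD, coeff_succ_X_mul, coeff_C_mul, map_add, coeff_one,
      PowerSeries.coeff_X]
    norm_num
    rw [h, inl_add]
    abel
  | (k + 2) =>
    simp [coeff_LD, coeff_succ_X_mul, PowerSeries.coeff_X]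

open PowerSeries DualNumber TrivSqZeroExt in
noncomputable def GD : PowerSeries (DualNumber ℚ) :=
  1 + C (R := DualNumber ℚ) (ε : DualNumber ℚ) * LD

open PowerSeries DualNumber TrivSqZeroExt in
lemma u_pow_mul_eps (n : ℕ) : ((1 + ε : DualNumber ℚ)) ^ n * ε = ε := by
  induction n with
  | zero => simp
  | succ k ihk =>
    rw [pow_succ, mul_assoc, add_mul, one_mul, eps_mul_eps, add_zero, ihk]

open PowerSeries DualNumber TrivSqZeroExt in
lemma rescale_GD : rescale ((1 + ε : DualNumber ℚ)) GD = GD := by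
  refine PowerSeries.ext fun n => ?_
  rw [coeff_rescale]
  match n with
  | 0 => rw [pow_zero, one_mul]
  | (k + 1) =>
    have h1 : coeff (R := DualNumber ℚ) (k+1) GD = ε * inl (1/2 : ℚ) := by
      rw [GD, map_add, PowerSeries.coeff_one, coeff_C_mul, coeff_LD,
        if_neg (Nat.succ_ne_zero k), if_neg (Nat.succ_ne_zero k), zero_add]
    rw [h1, ← mul_assoc, u_pow_mul_eps]

open PowerSeries DualNumber TrivSqZeroExt in
lemma GD_eq :
    (1 - C (R := DualNumber ℚ) (phi (qExp ^ 2)) * X) * (GD * rescale (phi (qExp ^ 2)) GD)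
      = C (R := DualNumber ℚ) (phi qExp) * (1 - X) := by
  have hinr : (inr (1/2 : ℚ) : DualNumber ℚ) = inl (1/2 : ℚ) * ε := by
    rw [DualNumber.eps, inl_mul_inr, smul_eq_mul, mul_one]
  rw [phi_qExp_sq, phi_qExp, hinr, rescale_GD, GD]
  have heps2 : (C (R := DualNumber ℚ) ε) * (C (R := DualNumber ℚ) ε) = 0 := by
    rw [← map_mul, eps_mul_eps, map_zero]
  have hnum : ∀ n : ℕ, (n : PowerSeries (DualNumber ℚ)) = C (R := DualNumber ℚ) (inl (n : ℚ)) := by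
    intro n
    rw [inl_natCast, map_natCast]
  have h4k : (4 : PowerSeries (DualNumber ℚ)) * C (R := DualNumber ℚ) (inl (1/4 : ℚ)) = 1 := by
    rw [show (4 : PowerSeries (DualNumber ℚ)) = ((4:ℕ) : PowerSeries (DualNumber ℚ)) by norm_num,
      hnum, ← map_mul, ← inl_mul]
    norm_num [inl_one]
  have hc2k : C (R := DualNumber ℚ) (inl (1/2 : ℚ)) = 2 * C (R := DualNumber ℚ) (inl (1/4 : ℚ)) := by
    rw [show (2 : PowerSeries (DualNumber ℚ)) = ((2:ℕ) : PowerSeries (DualNumber ℚ)) by norm_num,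
      hnum, ← map_mul, ← inl_mul]
    norm_num
  simp only [map_add, map_one, map_mul]
  linear_combination 2 * (C (R := DualNumber ℚ) (ε : DualNumber ℚ)) * key_identity
    + (C (R := DualNumber ℚ) (ε : DualNumber ℚ) * X) * h4k
    - (C (R := DualNumber ℚ) (ε : DualNumber ℚ) * (1 - X)) * hc2k
    + (LD * LD - X * (LD * LD) - 2 * (X * LD)
        - C (R := DualNumber ℚ) (ε : DualNumber ℚ) * (X * (LD * LD))) * heps2

open PowerSeries TrivSqZeroExt DualNumber in
lemma constantCoeff_mapphi_f (f : PowerSeries (PowerSeries ℚ))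
    (hf0 : PowerSeries.constantCoeff (R := PowerSeries ℚ) f
      = PowerSeries.rescale (1/4 : ℚ) (PowerSeries.exp ℚ)) :
    constantCoeff (R := DualNumber ℚ) (PowerSeries.map phi f) = 1 + inr (1/4 : ℚ) := by
  rw [← coeff_zero_eq_constantCoeff_apply, PowerSeries.coeff_map,
    coeff_zero_eq_constantCoeff_apply, hf0]
  exact phi_rescale_exp _

open PowerSeries TrivSqZeroExt DualNumber in
lemma constantCoeff_GD : constantCoeff (R := DualNumber ℚ) GD = 1 + inr (1/4 : ℚ) := by
  rw [GD, map_add, map_one, map_mul, constantCoeff_C, constantCoeff_LD, DualNumber.eps]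
  rw [mul_comm, inl_mul_inr, smul_eq_mul, mul_one]


/-- With `q = exp(h/2)`, the unique `f ∈ (ℚ[[h]])[[X]]` with constant term
`exp(h/4)` satisfying `(1 − q²X)·f(X)·f(q²X) = q·(1 − X)` satisfies `f ≡ 1 + h·Λ (mod h²)`:
every `X`-coefficient of `f − 1 − h·Λ` is divisible by `h²` in `ℚ[[h]]`. -/
theorem stmt_10 (f : PowerSeries (PowerSeries ℚ))
    (hf0 : PowerSeries.constantCoeff (R := PowerSeries ℚ) f
      = PowerSeries.rescale (1/4 : ℚ) (PowerSeries.exp ℚ))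
    (hf : (1 - PowerSeries.C (R := PowerSeries ℚ) (qExp ^ 2) * PowerSeries.X) * f
        * PowerSeries.rescale (qExp ^ 2) f
      = PowerSeries.C (R := PowerSeries ℚ) qExp * (1 - PowerSeries.X)) :
    ∀ n : ℕ, (PowerSeries.X : PowerSeries ℚ) ^ 2 ∣
      PowerSeries.coeff (R := PowerSeries ℚ) n
        (f - 1 - PowerSeries.C (R := PowerSeries ℚ) PowerSeries.X * Lam) := by
  have hmain : PowerSeries.map phi f = GD := by
    apply uniq (phi (qExp ^ 2)) _ _
      (PowerSeries.C (R := DualNumber ℚ) (phi qExp) * (1 - PowerSeries.X))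
    · intro m hm
      rw [TrivSqZeroExt.isUnit_iff_isUnit_fst, constantCoeff_mapphi_f f hf0, phi_qExp_sq]
      simp only [fst_mul, fst_add, fst_one, fst_inr, fst_pow, add_zero, one_pow]
      norm_num
    · rw [constantCoeff_mapphi_f f hf0, constantCoeff_GD]
    · have h := congrArg (PowerSeries.map phi) hf
      simp only [map_mul, map_sub, map_one, PowerSeries.map_C, PowerSeries.map_X,
        map_rescale] at h
      rw [mul_assoc] at h
      exact h
    · exact GD_eq
  intro n
  rw [X_sq_dvd_iff_phi, ← PowerSeries.coeff_map]
  simp only [map_sub, map_one, map_mul, PowerSeries.map_C, phi_h, hmain]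
  rw [show PowerSeries.map phi Lam = LD from rfl, GD]
  ring_nf
  rw [map_add]
  ring
end

section
/- Work in (ℚ[[h]])[[X]] and set q := exp(h/2) ∈ ℚ[[h]]. Let f ∈ (ℚ[[h]])[[X]] be the unique power series with constant term exp(h/4) satisfying (1 − q²X)·f(X)·f(q²X) = q·(1 − X), let d := (1 − X)·(q − q⁻¹X)⁻¹, and let Λ ∈ (ℚ[[h]])[[X]] be the power series whose constant coefficient is 1/4 and whose n-th coefficient is 1/2 for all n ≥ 1. Then f·d ≡ 1 − h·Λ (mod h²). (This is the entry R₂₂ = f(z)d(z) of the semiclassical expansion R(z) = 1 + h·r(z) + O(h²), whose classical r-matrix has corresponding entry −λ(z) with λ(z) = (1+z)/(4(1−z)).) -/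
/-- `d = (1 − X)·(q − q⁻¹X)⁻¹ ∈ (ℚ[[h]])[[X]]` (the factor `q − q⁻¹X` is invertible since
its constant term `q` is a unit, so `Ring.inverse` is its genuine inverse). -/
noncomputable def dSer : PowerSeries (PowerSeries ℚ) :=
  (1 - PowerSeries.X) * Ring.inverse
    (PowerSeries.C (R := PowerSeries ℚ) qExp - PowerSeries.C (R := PowerSeries ℚ) qExp⁻¹ * PowerSeries.X)

namespace Stmt13Aux

open PowerSeries

abbrev Rh := PowerSeries ℚ

/-- first-order coefficient extraction (h¹-coefficient) -/
noncomputable def c1 (a : Rh) : ℚ := coeff (R := ℚ) 1 a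

lemma c1_mul (a b : Rh) :
    c1 (a * b) = constantCoeff (R := ℚ) a * c1 b + c1 a * constantCoeff (R := ℚ) b := by
  unfold c1
  rw [PowerSeries.coeff_mul,
    show (Finset.HasAntidiagonal.antidiagonal 1 : Finset (ℕ × ℕ)) = {(0,1),(1,0)} from by decide]
  simp

/-- reduction mod h: apply constantCoeff in h to every X-coefficient -/
noncomputable def C0 : PowerSeries Rh →+* PowerSeries ℚ := PowerSeries.map (constantCoeff (R := ℚ))

/-- the h¹-part: apply c1 to every X-coefficient -/
noncomputable def C1 (F : PowerSeries Rh) : PowerSeries ℚ :=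
  PowerSeries.mk fun n => c1 (coeff (R := Rh) n F)

lemma coeff_C0 (F : PowerSeries Rh) (n : ℕ) :
    coeff (R := ℚ) n (C0 F) = constantCoeff (R := ℚ) (coeff (R := Rh) n F) := by
  simp [C0]

lemma coeff_C1 (F : PowerSeries Rh) (n : ℕ) :
    coeff (R := ℚ) n (C1 F) = coeff (R := ℚ) 1 (coeff (R := Rh) n F) := by
  simp [C1, c1]

lemma C1_mul (F G : PowerSeries Rh) :
    C1 (F * G) = C0 F * C1 G + C1 F * C0 G := by
  ext n
  rw [coeff_C1, map_add, PowerSeries.coeff_mul, PowerSeries.coeff_mul,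
    PowerSeries.coeff_mul, ← Finset.sum_add_distrib]
  rw [map_sum]
  apply Finset.sum_congr rfl
  intro p _
  rw [show ((coeff (R := ℚ) 1) (coeff (R := Rh) p.1 F * coeff (R := Rh) p.2 G)) =
      c1 (coeff (R := Rh) p.1 F * coeff (R := Rh) p.2 G) from rfl, c1_mul]
  rw [coeff_C0, coeff_C1, coeff_C0, coeff_C1]
  rfl

lemma C1_one : C1 1 = 0 := by
  ext n
  rw [coeff_C1, PowerSeries.coeff_one, map_zero]
  split <;> simp

lemma C1_add (F G : PowerSeries Rh) : C1 (F + G) = C1 F + C1 G := by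
  ext n; simp only [coeff_C1, map_add]

lemma C1_sub (F G : PowerSeries Rh) : C1 (F - G) = C1 F - C1 G := by
  ext n; simp only [coeff_C1, map_sub]

lemma C1_C (a : Rh) : C1 (C (R := Rh) a) = PowerSeries.C (R := ℚ) (coeff (R := ℚ) 1 a) := by
  ext n
  rw [coeff_C1, PowerSeries.coeff_C, PowerSeries.coeff_C]
  split <;> simp

lemma C1_X : C1 (X : PowerSeries Rh) = 0 := by
  ext n
  rw [coeff_C1, PowerSeries.coeff_X]
  split <;> simp

lemma C0_C (a : Rh) : C0 (C (R := Rh) a) = PowerSeries.C (R := ℚ) (constantCoeff (R := ℚ) a) := by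
  simp [C0]

lemma C0_X : C0 (X : PowerSeries Rh) = X := by
  simp [C0]

-- facts about q
lemma q_c0 : constantCoeff (R := ℚ) qExp = 1 := by
  rw [qExp, ← PowerSeries.coeff_zero_eq_constantCoeff, PowerSeries.coeff_rescale]
  simp [PowerSeries.coeff_exp]

lemma q_c1 : coeff (R := ℚ) 1 qExp = 1/2 := by
  rw [qExp, PowerSeries.coeff_rescale]
  simp [PowerSeries.coeff_exp]

lemma q_ne : constantCoeff (R := ℚ) qExp ≠ 0 := by rw [q_c0]; norm_num

lemma qinv_c0 : constantCoeff (R := ℚ) qExp⁻¹ = 1 := by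
  rw [PowerSeries.constantCoeff_inv, q_c0]; norm_num

lemma qinv_c1 : coeff (R := ℚ) 1 qExp⁻¹ = -(1/2) := by
  have h : qExp * qExp⁻¹ = 1 := PowerSeries.mul_inv_cancel _ q_ne
  have h1 := congrArg c1 h
  rw [c1_mul, q_c0, qinv_c0] at h1
  unfold c1 at h1
  rw [q_c1, PowerSeries.coeff_one] at h1
  simp at h1
  linarith

lemma q2_c0 : constantCoeff (R := ℚ) (qExp ^ 2) = 1 := by
  rw [map_pow, q_c0]; norm_num

lemma q2_c1 : coeff (R := ℚ) 1 (qExp ^ 2) = 1 := by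
  have : qExp ^ 2 = qExp * qExp := sq qExp
  rw [this, show (coeff (R := ℚ) 1) (qExp * qExp) = c1 (qExp * qExp) from rfl, c1_mul, q_c0]
  unfold c1
  rw [q_c1]
  norm_num

-- rescale facts
lemma C0_rescale (F : PowerSeries Rh) : C0 (rescale (qExp ^ 2) F) = C0 F := by
  ext n
  rw [coeff_C0, coeff_C0, PowerSeries.coeff_rescale, map_mul, map_pow, q2_c0]
  norm_num

lemma C1_rescale (F : PowerSeries Rh) (hF : C0 F = 1) :
    C1 (rescale (qExp ^ 2) F) = C1 F := by
  ext n
  rw [coeff_C1, coeff_C1, PowerSeries.coeff_rescale,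
    show (coeff (R := ℚ) 1) ((qExp ^ 2) ^ n * coeff (R := Rh) n F) = c1 ((qExp ^ 2) ^ n * coeff (R := Rh) n F)
      from rfl, c1_mul]
  have hc0 : constantCoeff (R := ℚ) ((qExp ^ 2) ^ n) = 1 := by rw [map_pow, q2_c0, one_pow]
  rw [hc0, one_mul]
  rcases n with _ | m
  · have : c1 (((qExp ^ 2) ^ 0 : Rh)) = 0 := by simp [c1]
    rw [pow_zero] at this ⊢
    unfold c1 at this ⊢
    rw [this]
    ring
  · have : constantCoeff (R := ℚ) (coeff (R := Rh) (m+1) F) = 0 := by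
      rw [← coeff_C0, hF, PowerSeries.coeff_one]
      simp
    rw [this]
    unfold c1
    ring

lemma one_sub_X_ne : (1 - X : PowerSeries ℚ) ≠ 0 := fun h => by
  have := congrArg (constantCoeff (R := ℚ)) h
  simp at this

end Stmt13Aux

open Stmt13Aux PowerSeries in
/-- With `q = exp(h/2)`, for the unique `f ∈ (ℚ[[h]])[[X]]` with constant
term `exp(h/4)` satisfying `(1 − q²X)·f(X)·f(q²X) = q·(1 − X)`, one has
`f·d ≡ 1 − h·Λ (mod h²)`: every `X`-coefficient of `f·d − 1 + h·Λ` is divisible by `h²`. -/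
theorem stmt_13 (f : PowerSeries (PowerSeries ℚ))
    (hf0 : PowerSeries.constantCoeff (R := PowerSeries ℚ) f
      = PowerSeries.rescale (1/4 : ℚ) (PowerSeries.exp ℚ))
    (hf : (1 - PowerSeries.C (R := PowerSeries ℚ) (qExp ^ 2) * PowerSeries.X) * f
        * PowerSeries.rescale (qExp ^ 2) f
      = PowerSeries.C (R := PowerSeries ℚ) qExp * (1 - PowerSeries.X)) :
    ∀ n : ℕ, (PowerSeries.X : PowerSeries ℚ) ^ 2 ∣
      PowerSeries.coeff (R := PowerSeries ℚ) n
        (f * dSer - 1 + PowerSeries.C (R := PowerSeries ℚ) PowerSeries.X * Lam) := by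
  -- abbreviations
  set A : PowerSeries Rh := 1 - C (R := Rh) (qExp ^ 2) * X with hA
  set E : PowerSeries Rh := C (R := Rh) qExp - C (R := Rh) qExp⁻¹ * X with hE
  -- C0 of A
  have hA0 : C0 A = 1 - X := by
    rw [hA, map_sub, map_one, map_mul, C0_C, C0_X, q2_c0, map_one, one_mul]
  -- C1 of A
  have hA1 : C1 A = -X := by
    rw [hA, C1_sub, C1_one, C1_mul, C1_C, C1_X, C0_C, C0_X, q2_c1, q2_c0, map_one]
    ring
  -- Step A : C0 f = 1
  have hf00 : constantCoeff (R := ℚ) (constantCoeff (R := Rh) f) = 1 := by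
    rw [hf0, ← PowerSeries.coeff_zero_eq_constantCoeff, PowerSeries.coeff_rescale]
    simp [PowerSeries.coeff_exp]
  have hB0 : (1 - X) * C0 f * C0 f = 1 - X := by
    have := congrArg C0 hf
    rw [map_mul, map_mul, hA0, C0_rescale, map_mul, C0_C, q_c0, map_one, one_mul,
      map_sub, map_one, C0_X] at this
    exact this
  have hf0sq : C0 f * C0 f = 1 := by
    apply mul_left_cancel₀ one_sub_X_ne
    rw [← mul_assoc, hB0, mul_one]
  have hf01 : C0 f = 1 := by
    have hfac : (C0 f - 1) * (C0 f + 1) = 0 := by linear_combination hf0sq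
    rcases mul_eq_zero.mp hfac with h | h
    · exact sub_eq_zero.mp h
    · exfalso
      have := congrArg (constantCoeff (R := ℚ)) h
      rw [map_add, map_one, ← PowerSeries.coeff_zero_eq_constantCoeff, coeff_C0,
        PowerSeries.coeff_zero_eq_constantCoeff, hf00] at this
      simp at this
  -- Step B : equation for φ = C1 f
  set φ : PowerSeries ℚ := C1 f with hφ
  have hD0 : C0 (rescale (qExp ^ 2) f) = 1 := by rw [C0_rescale, hf01]
  have hD1 : C1 (rescale (qExp ^ 2) f) = φ := by rw [C1_rescale f hf01]
  have hBraw : C1 ((A * f) * rescale (qExp ^ 2) f) = C1 (C (R := Rh) qExp * (1 - X)) :=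
    congrArg C1 hf
  have hBL : C1 ((A * f) * rescale (qExp ^ 2) f)
      = (1 - X) * φ + ((1 - X) * φ + (-X) * 1) := by
    rw [C1_mul, C1_mul, map_mul, hA0, hA1, hf01, hD0, hD1, mul_one, mul_one, mul_one]
  have hBR : C1 (C (R := Rh) qExp * (1 - X)) = PowerSeries.C (R := ℚ) (1/2) * (1 - X) := by
    rw [C1_mul, C1_C, C0_C, C1_sub, C1_one, C1_X, q_c1, q_c0, map_one,
      map_sub, map_one, C0_X]
    ring
  have hB : 2 * ((1 - X) * φ) = X + PowerSeries.C (R := ℚ) (1/2) * (1 - X) := by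
    have := hBL.symm.trans (hBraw.trans hBR)
    linear_combination this
  -- Step C : d
  have hEunit : IsUnit E := by
    rw [PowerSeries.isUnit_iff_constantCoeff]
    rw [hE, map_sub, map_mul, PowerSeries.constantCoeff_C, constantCoeff_X, mul_zero, sub_zero]
    rw [PowerSeries.isUnit_iff_constantCoeff, q_c0]
    exact isUnit_one
  have hd : dSer * E = 1 - X := by
    rw [dSer, hE, mul_assoc, Ring.inverse_mul_cancel _ hEunit, mul_one]
  have hE0 : C0 E = 1 - X := by
    rw [hE, map_sub, map_mul, C0_C, C0_C, C0_X, q_c0, qinv_c0, map_one, one_mul]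
  have hE1 : C1 E = PowerSeries.C (R := ℚ) (1/2) + PowerSeries.C (R := ℚ) (1/2) * X := by
    rw [hE, C1_sub, C1_C, C1_mul, C1_C, C1_X, C0_C, C0_X, q_c1, qinv_c1, qinv_c0]
    push_cast
    rw [map_neg]
    ring
  set ψ : PowerSeries ℚ := C1 dSer with hψ
  have hd0 : C0 dSer = 1 := by
    apply mul_right_cancel₀ one_sub_X_ne
    have := congrArg C0 hd
    rw [map_mul, hE0, map_sub, map_one, C0_X] at this
    rw [this, one_mul]
  have hC : (1 - X) * ψ = -(PowerSeries.C (R := ℚ) (1/2) + PowerSeries.C (R := ℚ) (1/2) * X) := by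
    have := congrArg C1 hd
    rw [C1_mul, hE0, hE1, hd0, C1_sub, C1_one, C1_X, one_mul] at this
    linear_combination this
  -- the target series L
  set L : PowerSeries ℚ := PowerSeries.mk fun n => if n = 0 then (1/4 : ℚ) else 1/2 with hLdef
  have hLam0 : C0 Lam = L := by
    ext n
    rw [coeff_C0, Lam, hLdef, PowerSeries.coeff_mk, PowerSeries.coeff_mk]
    split <;> simp
  have hLam1 : C1 Lam = 0 := by
    ext n
    rw [coeff_C1, Lam, PowerSeries.coeff_mk, map_zero]
    split <;> simp [PowerSeries.coeff_C]
  have hLm : (1 - X) * (4 * L) = 1 + X := by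
    have h4 : (4 : PowerSeries ℚ) = PowerSeries.C (R := ℚ) 4 := by
      rw [← map_ofNat (PowerSeries.C (R := ℚ)) 4]
    have expand : (1 - X) * (4 * L) = 4 * L - X * (4 * L) := by ring
    rw [expand]
    ext n
    rw [map_sub, h4, PowerSeries.coeff_C_mul]
    rcases n with _ | m
    · simp [hLdef]
    · rw [PowerSeries.coeff_succ_X_mul, PowerSeries.coeff_C_mul, hLdef,
        PowerSeries.coeff_mk, PowerSeries.coeff_mk]
      rcases m with _ | k <;> simp [PowerSeries.coeff_X] <;> norm_num
  -- combine
  have h2 : PowerSeries.C (R := ℚ) (1/2) * 2 = 1 := by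
    have hn : ((1:ℚ)/2) * 2 = 1 := by norm_num
    rw [show (2 : PowerSeries ℚ) = PowerSeries.C (R := ℚ) 2 from (map_ofNat (PowerSeries.C (R := ℚ)) 2).symm,
      ← map_mul, hn, map_one]
  have hB2 : 4 * ((1 - X) * φ) = 1 + X := by
    linear_combination 2 * hB + (1 - X) * h2
  have hC2 : 2 * ((1 - X) * ψ) = -(1 + X) := by
    linear_combination 2 * hC - (1 + X) * h2
  have key : (1 - X) * (4 * (φ + ψ + L)) = 0 := by
    linear_combination hB2 + 2 * hC2 + hLm
  have hsum : φ + ψ + L = 0 := by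
    rcases mul_eq_zero.mp key with h | h
    · exact absurd h one_sub_X_ne
    · have h4ne : (4 : PowerSeries ℚ) ≠ 0 := by
        intro hc
        have := congrArg (constantCoeff (R := ℚ)) hc
        rw [map_ofNat, map_zero] at this
        norm_num at this
      rcases mul_eq_zero.mp h with h' | h'
      · exact absurd h' h4ne
      · exact h'
  -- now the conclusion
  set Δ : PowerSeries Rh := f * dSer - 1 + C (R := Rh) (PowerSeries.X : Rh) * Lam with hΔ
  have hΔ0 : C0 Δ = 0 := by
    rw [hΔ, map_add, map_sub, map_mul, map_mul, hf01, hd0, C0_C, hLam0,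
      ← PowerSeries.coeff_zero_eq_constantCoeff]
    rw [PowerSeries.coeff_X, if_neg (by norm_num : ¬ (0 = 1))]
    simp
  have hΔ1 : C1 Δ = 0 := by
    rw [hΔ, C1_add, C1_sub, C1_mul, C1_one, C1_mul, C1_C, C0_C, hf01, hd0, hLam0, hLam1]
    rw [show PowerSeries.constantCoeff (R := ℚ) (PowerSeries.X : Rh) = 0 from by simp,
      show PowerSeries.coeff (R := ℚ) 1 (PowerSeries.X : Rh) = 1 from by simp]
    rw [map_zero, map_one]
    linear_combination hsum
  intro n
  rw [PowerSeries.X_pow_dvd_iff]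
  intro m hm
  interval_cases m
  · rw [PowerSeries.coeff_zero_eq_constantCoeff, ← coeff_C0, hΔ0, map_zero]
  · rw [← coeff_C1, hΔ1, map_zero]
end

section
/- Work in (ℚ[[h]])[[X]] and set q := exp(h/2) ∈ ℚ[[h]]. Let f ∈ (ℚ[[h]])[[X]] be the unique power series with constant term exp(h/4) satisfying (1 − q²X)·f(X)·f(q²X) = q·(1 − X), let d₂ := (1 − q²X)·(q − qX)⁻¹, and let Λ ∈ (ℚ[[h]])[[X]] be the power series whose constant coefficient is 1/4 and whose n-th coefficient is 1/2 for all n ≥ 1. Then f·d₂ ≡ 1 − h·Λ (mod h²). (This is the entry R₃₃ = f(z)d(q²z) of the semiclassical expansion R(z) = 1 + h·r(z) + O(h²), whose classical r-matrix has corresponding entry −λ(z) with λ(z) = (1+z)/(4(1−z)).) -/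
open PowerSeries


/-- `d₂ = (1 − q²X)·(q − qX)⁻¹ ∈ (ℚ[[h]])[[X]]`, i.e. the series `d(q²z)` (the factor `q − qX` is invertible since
its constant term `q` is a unit, so `Ring.inverse` is its genuine inverse). -/
noncomputable def d2Ser : PowerSeries (PowerSeries ℚ) :=
  (1 - PowerSeries.C (R := PowerSeries ℚ) (qExp ^ 2) * PowerSeries.X) * Ring.inverse
    (PowerSeries.C (R := PowerSeries ℚ) qExp - PowerSeries.C (R := PowerSeries ℚ) qExp * PowerSeries.X)


noncomputable def toDual : PowerSeries ℚ →+* DualNumber ℚ where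
  toFun F := TrivSqZeroExt.inl (PowerSeries.coeff (R := ℚ) 0 F) +
    TrivSqZeroExt.inr (PowerSeries.coeff (R := ℚ) 1 F)
  map_one' := by
    ext <;> simp
  map_mul' F G := by
    ext
    · simp [coeff_zero_eq_constantCoeff]
    · simp [DualNumber.snd_mul, coeff_one_mul, coeff_zero_eq_constantCoeff]
      ring
  map_zero' := by ext <;> simp
  map_add' F G := by ext <;> simp

@[simp] lemma toDual_fst (F : PowerSeries ℚ) : (toDual F).fst = PowerSeries.coeff (R := ℚ) 0 F := by
  simp [toDual]

@[simp] lemma toDual_snd (F : PowerSeries ℚ) : (toDual F).snd = PowerSeries.coeff (R := ℚ) 1 F := by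
  simp [toDual]

lemma toDual_rescale_exp (c : ℚ) :
    toDual (PowerSeries.rescale c (PowerSeries.exp ℚ)) =
      TrivSqZeroExt.inl 1 + TrivSqZeroExt.inr c := by
  ext
  · simp [coeff_rescale, coeff_exp]
  · simp [coeff_rescale, coeff_exp]

lemma toDual_X : toDual (PowerSeries.X : PowerSeries ℚ) = DualNumber.eps := by
  ext
  · rw [toDual_fst, DualNumber.fst_eps]; simp
  · rw [toDual_snd, DualNumber.snd_eps]; simp

lemma X_sq_dvd_of_toDual_eq_zero {F : PowerSeries ℚ} (h : toDual F = 0) :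
    (PowerSeries.X : PowerSeries ℚ) ^ 2 ∣ F := by
  rw [PowerSeries.X_pow_dvd_iff]
  intro m hm
  interval_cases m
  · have := congrArg TrivSqZeroExt.fst h; simpa using this
  · have := congrArg TrivSqZeroExt.snd h; simpa using this

-- map of rescale
lemma map_rescale_s14 {R S : Type*} [CommSemiring R] [CommSemiring S] (g : R →+* S)
    (a : R) (F : PowerSeries R) :
    PowerSeries.map g (PowerSeries.rescale a F)
      = PowerSeries.rescale (g a) (PowerSeries.map g F) := by
  ext n
  simp [coeff_rescale, PowerSeries.coeff_map]

lemma dn_mul_eq_zero {x y : DualNumber ℚ} (hx : x.fst = 0) (hy : y.fst = 0) : x * y = 0 := by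
  ext
  · simp [hx]
  · simp [DualNumber.snd_mul, hx, hy]

lemma ps_mul_eq_zero {x y : PowerSeries (DualNumber ℚ)}
    (hx : ∀ k, (PowerSeries.coeff k x).fst = 0)
    (hy : ∀ k, (PowerSeries.coeff k y).fst = 0) :
    x * y = 0 := by
  apply PowerSeries.ext; intro k
  rw [PowerSeries.coeff_mul, map_zero]
  apply Finset.sum_eq_zero
  intro p _
  exact dn_mul_eq_zero (hx p.1) (hy p.2)

lemma dn_pow_mul {x : DualNumber ℚ} (hx : x.fst = 0) (n : ℕ) :
    (1 + DualNumber.eps) ^ n * x = x := by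
  induction n with
  | zero => simp
  | succ n ih =>
    rw [pow_succ, mul_assoc]
    have hεx : DualNumber.eps * x = 0 := dn_mul_eq_zero (by simp) hx
    rw [add_mul, one_mul, hεx, add_zero, ih]

lemma ps_rescale_fix {x : PowerSeries (DualNumber ℚ)}
    (hx : ∀ k, (PowerSeries.coeff k x).fst = 0) :
    PowerSeries.rescale (1 + DualNumber.eps) x = x := by
  apply PowerSeries.ext; intro k
  rw [coeff_rescale, dn_pow_mul (hx k)]

lemma toDual_qExp : toDual qExp = 1 + TrivSqZeroExt.inr (1/2 : ℚ) := by
  unfold qExp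
  rw [toDual_rescale_exp]
  ext <;> simp

lemma toDual_qExp_sq : toDual (qExp ^ 2) = 1 + DualNumber.eps := by
  rw [map_pow, toDual_qExp]
  ext
  · simp
  · simp [DualNumber.snd_mul]

lemma toDual_C (r : ℚ) : toDual (PowerSeries.C (R := ℚ) r) = TrivSqZeroExt.inl r := by
  ext
  · simp
  · simp

lemma constantCoeff_qExp : PowerSeries.constantCoeff (R := ℚ) qExp = 1 := by
  unfold qExp
  rw [← coeff_zero_eq_constantCoeff_apply, coeff_rescale]
  simp [coeff_exp]

noncomputable def LamQ : PowerSeries ℚ :=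
  PowerSeries.mk fun n => if n = 0 then (1/4 : ℚ) else (1/2 : ℚ)

lemma LamQ_identity : 2 * LamQ * (1 - PowerSeries.X)
    = PowerSeries.X + PowerSeries.C (R := ℚ) (1/2) * (1 - PowerSeries.X) := by
  have h1 : 2 * LamQ * (1 - PowerSeries.X)
      = (LamQ + LamQ) - (LamQ + LamQ) * PowerSeries.X := by ring
  have h2 : PowerSeries.X + PowerSeries.C (R := ℚ) (1/2) * (1 - PowerSeries.X)
      = (PowerSeries.C (R := ℚ) (1/2) + PowerSeries.X)
        - PowerSeries.C (R := ℚ) (1/2) * PowerSeries.X := by ring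
  rw [h1, h2]
  apply PowerSeries.ext; intro k
  match k with
  | 0 => simp [LamQ]; norm_num
  | 1 => simp [LamQ, coeff_succ_mul_X, coeff_C, coeff_X]; norm_num
  | (k+2) => simp [LamQ, coeff_succ_mul_X, coeff_C, coeff_X]

noncomputable def Phi : PowerSeries (DualNumber ℚ) →+* PowerSeries ℚ :=
  PowerSeries.map (TrivSqZeroExt.fstHom ℚ ℚ ℚ).toRingHom

lemma Phi_coeff (Z : PowerSeries (DualNumber ℚ)) (k : ℕ) :
    PowerSeries.coeff (R := ℚ) k (Phi Z) = (PowerSeries.coeff k Z).fst := by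
  simp [Phi, PowerSeries.coeff_map]

lemma Phi_L : Phi (PowerSeries.map toDual Lam) = LamQ := by
  apply PowerSeries.ext; intro k
  simp [Phi, PowerSeries.coeff_map, Lam, LamQ, toDual_C, apply_ite]

lemma star2 :
    PowerSeries.C DualNumber.eps *
      (2 * PowerSeries.map toDual Lam * (1 - PowerSeries.X)
        - PowerSeries.X
        - PowerSeries.C (TrivSqZeroExt.inl (1/2 : ℚ)) * (1 - PowerSeries.X)) = 0 := by
  apply ps_mul_eq_zero
  · intro k; rw [coeff_C]; split <;> simp
  · intro k
    have hPhi : Phi (2 * PowerSeries.map toDual Lam * (1 - PowerSeries.X)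
        - PowerSeries.X
        - PowerSeries.C (TrivSqZeroExt.inl (1/2 : ℚ)) * (1 - PowerSeries.X)) = 0 := by
      have hC : Phi (PowerSeries.C (TrivSqZeroExt.inl (1/2 : ℚ)))
          = PowerSeries.C (R := ℚ) (1/2) := by
        simp [Phi, PowerSeries.map_C]
      have hX : Phi PowerSeries.X = PowerSeries.X := by
        simp [Phi, PowerSeries.map_X]
      simp only [map_sub, map_mul, map_ofNat, map_one, Phi_L, hX, hC]
      linear_combination LamQ_identity
    rw [← Phi_coeff, hPhi, map_zero]

lemma constantCoeff_rescale_exp (c : ℚ) :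
    PowerSeries.constantCoeff (R := ℚ) (PowerSeries.rescale c (PowerSeries.exp ℚ)) = 1 := by
  rw [← coeff_zero_eq_constantCoeff_apply, coeff_rescale]
  simp [coeff_exp]

lemma inl_half_mul_eps :
    (TrivSqZeroExt.inl (1/2 : ℚ) : DualNumber ℚ) * DualNumber.eps
      = TrivSqZeroExt.inr (1/2 : ℚ) := by
  ext
  · simp
  · simp [DualNumber.snd_mul]


set_option maxHeartbeats 1000000 in
/-- With `q = exp(h/2)`, for the unique `f ∈ (ℚ[[h]])[[X]]` with constant
term `exp(h/4)` satisfying `(1 − q²X)·f(X)·f(q²X) = q·(1 − X)`, one has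
`f·d₂ ≡ 1 − h·Λ (mod h²)`: every `X`-coefficient of `f·d₂ − 1 + h·Λ` is divisible by `h²`. -/
theorem stmt_14 (f : PowerSeries (PowerSeries ℚ))
    (hf0 : PowerSeries.constantCoeff (R := PowerSeries ℚ) f
      = PowerSeries.rescale (1/4 : ℚ) (PowerSeries.exp ℚ))
    (hf : (1 - PowerSeries.C (R := PowerSeries ℚ) (qExp ^ 2) * PowerSeries.X) * f
        * PowerSeries.rescale (qExp ^ 2) f
      = PowerSeries.C (R := PowerSeries ℚ) qExp * (1 - PowerSeries.X)) :
    ∀ n : ℕ, (PowerSeries.X : PowerSeries ℚ) ^ 2 ∣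
      PowerSeries.coeff (R := PowerSeries ℚ) n
        (f * d2Ser - 1 + PowerSeries.C (R := PowerSeries ℚ) PowerSeries.X * Lam) := by
  classical
  have hρq : PowerSeries.constantCoeff (R := ℚ) qExp = 1 := constantCoeff_qExp
  have hρq2 : PowerSeries.constantCoeff (R := ℚ) (qExp ^ 2) = 1 := by
    rw [map_pow, hρq]; norm_num
  -- Step A: the zeroth-order part of f is 1
  have hA1 : PowerSeries.map (PowerSeries.constantCoeff (R := ℚ)) f = 1 := by
    set A := PowerSeries.map (PowerSeries.constantCoeff (R := ℚ)) f with hAdef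
    have hmap := congrArg (PowerSeries.map (PowerSeries.constantCoeff (R := ℚ))) hf
    simp only [map_mul, map_sub, map_one, PowerSeries.map_C, PowerSeries.map_X, map_rescale_s14,
        hρq2, hρq, PowerSeries.rescale_one, RingHom.id_apply] at hmap
    have hne : (1 - PowerSeries.X : PowerSeries ℚ) ≠ 0 := by
      intro h
      have := congrArg (PowerSeries.constantCoeff (R := ℚ)) h
      simpa using this
    have hAA : A * A = 1 := by
      apply mul_left_cancel₀ hne
      rw [mul_one]
      linear_combination hmap
    have hcc : PowerSeries.constantCoeff (R := ℚ) A = 1 := by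
      rw [hAdef, ← coeff_zero_eq_constantCoeff_apply, PowerSeries.coeff_map,
        coeff_zero_eq_constantCoeff_apply, hf0, constantCoeff_rescale_exp]
    rcases mul_self_eq_one_iff.mp hAA with h | h
    · exact h
    · rw [h] at hcc
      norm_num at hcc
  -- Dual-number projection
  set P : PowerSeries (DualNumber ℚ) := PowerSeries.map toDual f with hPdef
  set E : PowerSeries (DualNumber ℚ) := P - 1 with hEdef
  have hEfst : ∀ k, ((PowerSeries.coeff (R := DualNumber ℚ) k) E).fst = 0 := by
    intro k
    have h1 : ((PowerSeries.coeff (R := DualNumber ℚ) k) P).fst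
        = PowerSeries.coeff (R := ℚ) k (PowerSeries.map (PowerSeries.constantCoeff (R := ℚ)) f) := by
      rw [hPdef, PowerSeries.coeff_map, PowerSeries.coeff_map, toDual_fst,
        coeff_zero_eq_constantCoeff_apply]
    rw [hEdef, map_sub, TrivSqZeroExt.fst_sub, h1, hA1]
    rw [PowerSeries.coeff_one, PowerSeries.coeff_one, apply_ite TrivSqZeroExt.fst]
    split <;> simp
  have hCe : ∀ k, ((PowerSeries.coeff (R := DualNumber ℚ) k)
      (PowerSeries.C (R := DualNumber ℚ) DualNumber.eps)).fst = 0 := by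
    intro k; rw [coeff_C]; split <;> simp
  have hCs : ∀ k, ((PowerSeries.coeff (R := DualNumber ℚ) k)
      (PowerSeries.C (R := DualNumber ℚ) (TrivSqZeroExt.inr (1/2 : ℚ)))).fst = 0 := by
    intro k; rw [coeff_C]; split <;> simp
  have z1 : E * E = 0 := ps_mul_eq_zero hEfst hEfst
  have z2 : E * PowerSeries.C (R := DualNumber ℚ) DualNumber.eps = 0 := ps_mul_eq_zero hEfst hCe
  have z5 : PowerSeries.C (R := DualNumber ℚ) DualNumber.eps
      * PowerSeries.C (R := DualNumber ℚ) (TrivSqZeroExt.inr (1/2 : ℚ)) = 0 :=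
    ps_mul_eq_zero hCe hCs
  have hPE : P = 1 + E := by rw [hEdef]; ring
  -- rescale invariance
  have hres : PowerSeries.rescale (1 + DualNumber.eps) P = P := by
    rw [hPE, map_add, map_one, ps_rescale_fix hEfst]
  -- the mapped functional equation
  have H1 : (1 - (1 + PowerSeries.C (R := DualNumber ℚ) DualNumber.eps) * PowerSeries.X) * P * P
      = (1 + PowerSeries.C (R := DualNumber ℚ) (TrivSqZeroExt.inr (1/2 : ℚ)))
        * (1 - PowerSeries.X) := by
    have hmap := congrArg (PowerSeries.map toDual) hf
    simp only [map_add, map_mul, map_sub, map_one, PowerSeries.map_C, PowerSeries.map_X,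
      map_rescale_s14, toDual_qExp_sq, toDual_qExp] at hmap
    rw [← hPdef] at hmap
    rw [hres] at hmap
    linear_combination hmap
  -- key first-order identity
  have step : 2 * ((1 - PowerSeries.X) * E)
      = PowerSeries.C (R := DualNumber ℚ) DualNumber.eps * PowerSeries.X
        + PowerSeries.C (R := DualNumber ℚ) (TrivSqZeroExt.inr (1/2 : ℚ))
          * (1 - PowerSeries.X) := by
    rw [hPE] at H1
    linear_combination H1 + (PowerSeries.C (R := DualNumber ℚ) DualNumber.eps * PowerSeries.X
      - (1 - PowerSeries.X)) * z1 + (2 * PowerSeries.X) * z2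
  -- the Λ identity, in terms of inr (1/2)
  have hsC : PowerSeries.C (R := DualNumber ℚ) DualNumber.eps
      * PowerSeries.C (R := DualNumber ℚ) (TrivSqZeroExt.inl (1/2 : ℚ))
      = PowerSeries.C (R := DualNumber ℚ) (TrivSqZeroExt.inr (1/2 : ℚ)) := by
    rw [← map_mul, mul_comm, inl_half_mul_eps]
  have star2' : 2 * PowerSeries.C (R := DualNumber ℚ) DualNumber.eps
        * PowerSeries.map toDual Lam * (1 - PowerSeries.X)
      = PowerSeries.C (R := DualNumber ℚ) DualNumber.eps * PowerSeries.X
        + PowerSeries.C (R := DualNumber ℚ) (TrivSqZeroExt.inr (1/2 : ℚ))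
          * (1 - PowerSeries.X) := by
    linear_combination star2 + (1 - PowerSeries.X) * hsC
  -- inverse of q - qX
  have hunit : IsUnit (PowerSeries.C (R := PowerSeries ℚ) qExp
      - PowerSeries.C (R := PowerSeries ℚ) qExp * PowerSeries.X) := by
    rw [PowerSeries.isUnit_iff_constantCoeff]
    have hc : PowerSeries.constantCoeff (R := PowerSeries ℚ)
        (PowerSeries.C (R := PowerSeries ℚ) qExp
          - PowerSeries.C (R := PowerSeries ℚ) qExp * PowerSeries.X) = qExp := by
      simp
    rw [hc, PowerSeries.isUnit_iff_constantCoeff, constantCoeff_qExp]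
    exact isUnit_one
  have hInv : (PowerSeries.C (R := PowerSeries ℚ) qExp
        - PowerSeries.C (R := PowerSeries ℚ) qExp * PowerSeries.X)
      * Ring.inverse (PowerSeries.C (R := PowerSeries ℚ) qExp
        - PowerSeries.C (R := PowerSeries ℚ) qExp * PowerSeries.X) = 1 :=
    Ring.mul_inverse_cancel _ hunit
  set Iv : PowerSeries (DualNumber ℚ) := PowerSeries.map toDual
    (Ring.inverse (PowerSeries.C (R := PowerSeries ℚ) qExp
      - PowerSeries.C (R := PowerSeries ℚ) qExp * PowerSeries.X)) with hIvdef
  have hu : ((1 + PowerSeries.C (R := DualNumber ℚ) (TrivSqZeroExt.inr (1/2 : ℚ)))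
      * (1 - PowerSeries.X)) * Iv = 1 := by
    have hm := congrArg (PowerSeries.map toDual) hInv
    simp only [map_mul, map_sub, map_one, PowerSeries.map_C, PowerSeries.map_X,
      toDual_qExp] at hm
    rw [map_add (PowerSeries.C (R := DualNumber ℚ)), map_one] at hm
    rw [hIvdef]
    linear_combination hm
  -- finish
  intro n
  apply X_sq_dvd_of_toDual_eq_zero
  rw [← PowerSeries.coeff_map]
  have hW : PowerSeries.map toDual
      (f * d2Ser - 1 + PowerSeries.C (R := PowerSeries ℚ) PowerSeries.X * Lam) = 0 := by
    have hmapW : PowerSeries.map toDual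
        (f * d2Ser - 1 + PowerSeries.C (R := PowerSeries ℚ) PowerSeries.X * Lam)
        = P * ((1 - (1 + PowerSeries.C (R := DualNumber ℚ) DualNumber.eps) * PowerSeries.X) * Iv)
          - 1 + PowerSeries.C (R := DualNumber ℚ) DualNumber.eps * PowerSeries.map toDual Lam := by
      rw [d2Ser]
      simp only [map_add, map_sub, map_mul, map_one, PowerSeries.map_C, PowerSeries.map_X,
        toDual_qExp_sq, toDual_X]
      rfl
    rw [hmapW, hPE]
    clear_value P E Iv
    have ht : (2 : PowerSeries (DualNumber ℚ))
        * PowerSeries.C (R := DualNumber ℚ) (TrivSqZeroExt.inl (1/2 : ℚ)) = 1 := by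
      have h2 : ((1 : DualNumber ℚ) + 1) * TrivSqZeroExt.inl (1/2 : ℚ) = 1 := by
        ext
        · simp; norm_num
        · simp [DualNumber.snd_mul]
      have hC2 : (2 : PowerSeries (DualNumber ℚ))
          = PowerSeries.C (R := DualNumber ℚ) ((1 : DualNumber ℚ) + 1) := by
        rw [map_add, map_one]; norm_num
      rw [hC2, ← map_mul, h2, map_one]
    have hWu : ((1 + E) * ((1 - (1 + PowerSeries.C (R := DualNumber ℚ) DualNumber.eps)
            * PowerSeries.X) * Iv) - 1
          + PowerSeries.C (R := DualNumber ℚ) DualNumber.eps * PowerSeries.map toDual Lam)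
        * ((1 + PowerSeries.C (R := DualNumber ℚ) (TrivSqZeroExt.inr (1/2 : ℚ)))
          * (1 - PowerSeries.X)) = 0 := by
      linear_combination
        (PowerSeries.C (R := DualNumber ℚ) (TrivSqZeroExt.inl (1/2 : ℚ)) * 2 * (1 + E)
          * (1 - (1 + PowerSeries.C (R := DualNumber ℚ) DualNumber.eps) * PowerSeries.X)) * hu
        + PowerSeries.C (R := DualNumber ℚ) (TrivSqZeroExt.inl (1/2 : ℚ)) * step
        + PowerSeries.C (R := DualNumber ℚ) (TrivSqZeroExt.inl (1/2 : ℚ)) * star2'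
        + (- 2 * PowerSeries.C (R := DualNumber ℚ) (TrivSqZeroExt.inl (1/2 : ℚ))
            * PowerSeries.X) * z2
        + (2 * PowerSeries.C (R := DualNumber ℚ) (TrivSqZeroExt.inl (1/2 : ℚ))
            * PowerSeries.map toDual Lam * (1 - PowerSeries.X)) * z5
        - (((1 + E) * ((1 - (1 + PowerSeries.C (R := DualNumber ℚ) DualNumber.eps)
              * PowerSeries.X) * Iv) - 1
            + PowerSeries.C (R := DualNumber ℚ) DualNumber.eps * PowerSeries.map toDual Lam)
          * ((1 + PowerSeries.C (R := DualNumber ℚ) (TrivSqZeroExt.inr (1/2 : ℚ)))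
            * (1 - PowerSeries.X))) * ht
    calc (1 + E) * ((1 - (1 + PowerSeries.C (R := DualNumber ℚ) DualNumber.eps)
            * PowerSeries.X) * Iv) - 1
          + PowerSeries.C (R := DualNumber ℚ) DualNumber.eps * PowerSeries.map toDual Lam
        = ((1 + E) * ((1 - (1 + PowerSeries.C (R := DualNumber ℚ) DualNumber.eps)
            * PowerSeries.X) * Iv) - 1
          + PowerSeries.C (R := DualNumber ℚ) DualNumber.eps * PowerSeries.map toDual Lam)
          * (((1 + PowerSeries.C (R := DualNumber ℚ) (TrivSqZeroExt.inr (1/2 : ℚ)))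
            * (1 - PowerSeries.X)) * Iv) := by rw [hu, mul_one]
      _ = (((1 + E) * ((1 - (1 + PowerSeries.C (R := DualNumber ℚ) DualNumber.eps)
            * PowerSeries.X) * Iv) - 1
          + PowerSeries.C (R := DualNumber ℚ) DualNumber.eps * PowerSeries.map toDual Lam)
          * ((1 + PowerSeries.C (R := DualNumber ℚ) (TrivSqZeroExt.inr (1/2 : ℚ)))
            * (1 - PowerSeries.X))) * Iv := by ring
      _ = 0 := by rw [hWu, zero_mul]
  rw [hW, map_zero]
end
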